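/- arXiv:math/0007111 — 4 statements merged into one kernel-verified Lean document; each statement's English description precedes it below -/
import Mathlib

section
/- For a complex-valued Lipschitz function u on an open set U ⊆ ℝⁿ and a real 1-form a with C¹ components, the function |u| is Lipschitz and satisfies |∇|u|(x)| ≤ |∇u(x) + i u(x) a(x)| for almost every x ∈ U (the diamagnetic inequality). -/
/-!
Where `u ≠ 0`, the chain rule gives `∂ⱼ|u| = ⟪u, ∂ⱼu⟫_ℝ / |u|`. Since `i u aⱼ` is real-orthogonal
to `u`, the numerator does not change when `∂ⱼu` is replaced by `∂ⱼu + i u aⱼ`, and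
Cauchy–Schwarz bounds every partial derivative of `|u|` by the corresponding magnetic one.
Where `u = 0`, `|u|` has a local minimum, so its derivative vanishes. Rademacher's theorem
supplies differentiability of `u` almost everywhere.
-/

open MeasureTheory Metric Filter

noncomputable section

/-- Euclidean space ℝⁿ. -/
abbrev En (n : ℕ) := EuclideanSpace ℝ (Fin n)

/-- Partial derivative ∂f/∂xʲ of a complex-valued function. -/
def pd {n : ℕ} (f : En n → ℂ) (j : Fin n) (x : En n) : ℂ :=
  fderiv ℝ f x (EuclideanSpace.single j 1)

/-- Partial derivative ∂f/∂xʲ of a real-valued function. -/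
def pdR {n : ℕ} (f : En n → ℝ) (j : Fin n) (x : En n) : ℝ :=
  fderiv ℝ f x (EuclideanSpace.single j 1)

/-- The magnetic momentum operator P_j = (1/i)∂_j + a_j applied to u. -/
def magP {n : ℕ} (a : Fin n → En n → ℝ) (j : Fin n) (u : En n → ℂ) (x : En n) : ℂ :=
  -Complex.I * pd u j x + (a j x : ℂ) * u x

/-- Components of the magnetic field B = da, B_{jk} = ∂a_k/∂x^j − ∂a_j/∂x^k. -/
def Bfield {n : ℕ} (a : Fin n → En n → ℝ) (j k : Fin n) (x : En n) : ℝ :=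
  pdR (a k) j x - pdR (a j) k x

open scoped InnerProductSpace

theorem LocallyLipschitzOn.ae_differentiableAt {E F : Type*} [NormedAddCommGroup E]
    [NormedSpace ℝ E] [FiniteDimensional ℝ E] [MeasurableSpace E] [BorelSpace E]
    [NormedAddCommGroup F] [NormedSpace ℝ F] [FiniteDimensional ℝ F]
    {μ : Measure E} [μ.IsAddHaarMeasure] {U : Set E} {f : E → F}
    (hU : IsOpen U) (hf : LocallyLipschitzOn U f) :
    ∀ᵐ x ∂μ.restrict U, DifferentiableAt ℝ f x := by
  rw [ae_restrict_iff' hU.measurableSet, ae_iff]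
  refine measure_null_of_locally_null _ fun x hx => ?_
  obtain ⟨hxU, -⟩ := Classical.not_imp.1 hx
  obtain ⟨K, t, ht, hK⟩ := hf hxU
  rw [hU.nhdsWithin_eq hxU] at ht
  obtain ⟨V, hVt, hVo, hxV⟩ := _root_.mem_nhds_iff.1 ht
  refine ⟨_ ∩ V, inter_mem_nhdsWithin _ (hVo.mem_nhds hxV),
    measure_mono_null ?_ (ae_iff.1 (hK.mono hVt).ae_differentiableWithinAt_of_mem)⟩
  rintro y ⟨hy, hyV⟩ hdiff
  exact hy fun _ => (hdiff hyV).differentiableAt (hVo.mem_nhds hyV)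

theorem HasFDerivAt.norm {G F : Type*} [NormedAddCommGroup G] [NormedSpace ℝ G]
    [NormedAddCommGroup F] [InnerProductSpace ℝ F] {f : G → F} {f' : G →L[ℝ] F} {x : G}
    (hf : HasFDerivAt f f' x) (h0 : f x ≠ 0) :
    HasFDerivAt (fun y => ‖f y‖) (‖f x‖⁻¹ • (innerSL ℝ (f x)).comp f') x := by
  have h := hf.norm_sq.sqrt (pow_ne_zero 2 (norm_ne_zero_iff.2 h0))
  simp only [Real.sqrt_sq (norm_nonneg _)] at h
  convert h using 1
  ext v
  simp only [smul_apply, ContinuousLinearMap.comp_apply, coe_innerSL_apply, smul_eq_mul, one_div,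
    mul_inv_rev, two_smul, smul_add, add_apply]
  field_simp
  ring

theorem EuclideanSpace.norm_strongDual_eq {ι : Type*} [Fintype ι] [DecidableEq ι]
    (ℓ : StrongDual ℝ (EuclideanSpace ℝ ι)) :
    ‖ℓ‖ = √(∑ j, ℓ (EuclideanSpace.single j 1) ^ 2) := by
  rw [← (InnerProductSpace.toDual ℝ _).symm.norm_map, EuclideanSpace.norm_eq]
  congr! 2 with j
  rw [Real.norm_eq_abs, sq_abs, ← InnerProductSpace.toDual_symm_apply,
    EuclideanSpace.inner_single_right]
  simp

theorem Complex.real_inner_self_I_mul (w : ℂ) (c : ℝ) :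
    ⟪w, Complex.I * w * c⟫_ℝ = 0 := by
  simp only [Complex.inner, Complex.mul_re, Complex.mul_im, Complex.I_re, Complex.I_im,
    Complex.ofReal_re, Complex.ofReal_im, Complex.conj_re, Complex.conj_im]
  ring

theorem abs_fderiv_norm_apply_le {E : Type*} [NormedAddCommGroup E] [NormedSpace ℝ E]
    {u : E → ℂ} {x : E} (hu : DifferentiableAt ℝ u x) (v : E) (c : ℝ) :
    |fderiv ℝ (fun y => ‖u y‖) x v| ≤ ‖fderiv ℝ u x v + Complex.I * u x * c‖ := by
  by_cases h0 : u x = 0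
  · have hmin : IsLocalMin (fun y => ‖u y‖) x :=
      Eventually.of_forall fun y => by simp [h0]
    simp [hmin.fderiv_eq_zero]
  rw [(hu.hasFDerivAt.norm h0).fderiv]
  calc |(‖u x‖⁻¹ • (innerSL ℝ (u x)).comp (fderiv ℝ u x)) v|
      = |⟪u x, fderiv ℝ u x v + Complex.I * u x * c⟫_ℝ| / ‖u x‖ := by
        rw [inner_add_right, Complex.real_inner_self_I_mul, add_zero]
        simp only [smul_apply, ContinuousLinearMap.comp_apply,
          innerSL_apply_apply, smul_eq_mul, abs_mul, abs_inv, abs_norm, div_eq_inv_mul]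
    _ ≤ ‖u x‖ * ‖fderiv ℝ u x v + Complex.I * u x * c‖ / ‖u x‖ := by
        gcongr
        exact abs_real_inner_le_norm _ _
    _ = ‖fderiv ℝ u x v + Complex.I * u x * c‖ := by field_simp

theorem stmt0_general {n : ℕ} (U : Set (En n)) (hU : IsOpen U)
    (u : En n → ℂ) (a : Fin n → En n → ℝ)
    (hu : ∀ x ∈ U, ∃ (K : NNReal) (t : Set (En n)), t ∈ nhds x ∧ LipschitzOnWith K u t) :
    (∀ x ∈ U, ∃ (K : NNReal) (t : Set (En n)), t ∈ nhds x ∧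
        LipschitzOnWith K (fun y => ‖u y‖) t) ∧
    (∀ᵐ x ∂(volume.restrict U),
      ‖fderiv ℝ (fun y => ‖u y‖) x‖ ≤
        Real.sqrt (∑ j, ‖pd u j x + Complex.I * u x * (a j x : ℂ)‖ ^ 2)) := by
  have hLip : LocallyLipschitzOn U u := fun x hx =>
    let ⟨K, t, ht, hK⟩ := hu x hx
    ⟨K, t, mem_nhdsWithin_of_mem_nhds ht, hK⟩
  refine ⟨fun x hx => ?_, ?_⟩
  · obtain ⟨K, t, ht, hK⟩ := hu x hx
    exact ⟨1 * K, t, ht, lipschitzWith_one_norm.comp_lipschitzOnWith hK⟩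
  filter_upwards [hLip.ae_differentiableAt hU] with x hx
  rw [EuclideanSpace.norm_strongDual_eq]
  refine Real.sqrt_le_sqrt (Finset.sum_le_sum fun j _ => ?_)
  exact sq_le_sq.2 ((abs_fderiv_norm_apply_le hx _ (a j x)).trans (le_abs_self _))

/-- diamagnetic inequality: for a locally Lipschitz complex function `u` on an
open set `U ⊆ ℝⁿ` and a real magnetic potential `a` with C¹ components, `|u|` is locally
Lipschitz on `U` and `|∇|u|(x)| ≤ |∇u(x) + i u(x) a(x)|` for a.e. `x ∈ U`. -/
theorem stmt0 {n : ℕ} (U : Set (En n)) (hU : IsOpen U)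
    (u : En n → ℂ) (a : Fin n → En n → ℝ)
    (ha : ∀ j, ContDiff ℝ 1 (a j))
    (hu : ∀ x ∈ U, ∃ (K : NNReal) (t : Set (En n)), t ∈ nhds x ∧ LipschitzOnWith K u t) :
    (∀ x ∈ U, ∃ (K : NNReal) (t : Set (En n)), t ∈ nhds x ∧
        LipschitzOnWith K (fun y => ‖u y‖) t) ∧
    (∀ᵐ x ∂(volume.restrict U),
      ‖fderiv ℝ (fun y => ‖u y‖) x‖ ≤
        Real.sqrt (∑ j, ‖pd u j x + Complex.I * u x * (a j x : ℂ)‖ ^ 2)) :=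
  stmt0_general U hU u a hu
end
end

section
/- Let B be locally Lipschitz with components B_{jk}, let χ : [0,∞) → [0,1] be Lipschitz with χ(r)=0 for r ≤ 1/2, χ(r)=1 for r ≥ 1, χ(r)=2r−1 on [1/2,1], and define A_{jk}(x) = χ(|B(x)|) B_{jk}(x)/|B(x)| (set A_{jk}=0 where |B| ≤ 1/2). Then almost everywhere, |∇A(x)| ≤ 12 (1 + |B(x)|)^{−1} |∇B(x)|. -/
open MeasureTheory Metric Filter Topology

noncomputable section

/-- The pointwise norm `|B| = (Σ_{j<k} B_{jk}²)^{1/2}` of a field of 2-forms. -/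
def normB {n : ℕ} (B : Fin n → Fin n → En n → ℝ) (x : En n) : ℝ :=
  Real.sqrt (∑ j, ∑ k, if j < k then (B j k x) ^ 2 else 0)

section Aux

variable {F : Type*} [NormedAddCommGroup F] [InnerProductSpace ℝ F]

lemma radial_aux {b b' : F} (hb : b ≠ 0) (hb' : b' ≠ 0) (h : ‖b'‖ ≤ ‖b‖) :
    ‖(‖b‖⁻¹ • b) - (‖b'‖⁻¹ • b')‖ * ‖b'‖ ≤ ‖b - b'‖ := by
  have hu : (0:ℝ) < ‖b‖ := norm_pos_iff.2 hb
  have hv : (0:ℝ) < ‖b'‖ := norm_pos_iff.2 hb'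
  have hc : (inner ℝ b b' : ℝ) ≤ ‖b‖ * ‖b'‖ := real_inner_le_norm b b'
  have key : (‖(‖b‖⁻¹ • b) - (‖b'‖⁻¹ • b')‖ * ‖b'‖)^2 ≤ ‖b - b'‖^2 := by
    rw [mul_pow, norm_sub_sq_real, norm_sub_sq_real]
    rw [real_inner_smul_left, real_inner_smul_right]
    rw [norm_smul, norm_smul]
    simp only [norm_inv, norm_norm]
    rw [inv_mul_cancel₀ hu.ne', inv_mul_cancel₀ hv.ne']
    have e1 : (‖b‖⁻¹ * (‖b'‖⁻¹ * (inner ℝ b b' : ℝ))) * (‖b‖ * ‖b'‖) = (inner ℝ b b' : ℝ) := by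
      field_simp
    nlinarith [mul_nonneg (sub_nonneg.2 h) (by nlinarith : (0:ℝ) ≤ ‖b‖^2 + ‖b‖*‖b'‖ - 2*(inner ℝ b b' : ℝ)), sq_nonneg (‖b‖ - ‖b'‖)]
  have h1 : 0 ≤ ‖(‖b‖⁻¹ • b) - (‖b'‖⁻¹ • b')‖ * ‖b'‖ := by positivity
  nlinarith [norm_nonneg (b - b')]

lemma radial {b b' : F} (hb : b ≠ 0) (hb' : b' ≠ 0) {r : ℝ} (hr : 0 < r)
    (h1 : r ≤ ‖b‖) (h2 : r ≤ ‖b'‖) :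
    ‖(‖b‖⁻¹ • b) - (‖b'‖⁻¹ • b')‖ ≤ ‖b - b'‖ / r := by
  rw [le_div_iff₀ hr]
  rcases le_total ‖b'‖ ‖b‖ with h | h
  · calc ‖(‖b‖⁻¹ • b) - (‖b'‖⁻¹ • b')‖ * r ≤ ‖(‖b‖⁻¹ • b) - (‖b'‖⁻¹ • b')‖ * ‖b'‖ := by
          gcongr
      _ ≤ ‖b - b'‖ := radial_aux hb hb' h
  · calc ‖(‖b‖⁻¹ • b) - (‖b'‖⁻¹ • b')‖ * r = ‖(‖b'‖⁻¹ • b') - (‖b‖⁻¹ • b)‖ * r := by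
          rw [norm_sub_rev]
      _ ≤ ‖(‖b'‖⁻¹ • b') - (‖b‖⁻¹ • b)‖ * ‖b‖ := by gcongr
      _ ≤ ‖b' - b‖ := radial_aux hb' hb h
      _ = ‖b - b'‖ := norm_sub_rev _ _

lemma star_lemma (χ : ℝ → ℝ) (hχlip : LipschitzWith 2 χ)
    (hχ0 : ∀ s ≤ (1/2:ℝ), χ s = 0) (hχ1 : ∀ s ≥ (1:ℝ), χ s = 1)
    (hχmid : ∀ s ∈ Set.Icc (1/2:ℝ) 1, χ s = 2*s - 1)
    (hχrange : ∀ s, χ s ∈ Set.Icc (0:ℝ) 1)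
    (b b₀ : F) :
    ‖(χ ‖b‖ / ‖b‖) • b - (χ ‖b₀‖ / ‖b₀‖) • b₀‖ ≤ 12 * (1 + ‖b₀‖)⁻¹ * ‖b - b₀‖ := by
  have hchiLip : ∀ a c : ℝ, |χ a - χ c| ≤ 2 * |a - c| := by
    intro a c
    have := hχlip.dist_le_mul a c
    rw [Real.dist_eq, Real.dist_eq] at this
    exact le_trans this (by norm_num)
  have hle : ∀ s : ℝ, 1/2 ≤ s → χ s ≤ 2*s - 1 := by
    intro s hs
    rcases le_total s 1 with h | h
    · exact le_of_eq (hχmid s ⟨hs, h⟩)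
    · rw [hχ1 s h]; linarith
  have hnorm : ∀ c : F, ‖(χ ‖c‖ / ‖c‖) • c‖ = χ ‖c‖ := by
    intro c
    rcases eq_or_ne c 0 with rfl | hc
    · simp [hχ0 0 (by norm_num)]
    · have hc' : (0:ℝ) < ‖c‖ := norm_pos_iff.2 hc
      rw [norm_smul, Real.norm_eq_abs, abs_div, abs_of_nonneg (hχrange _).1,
        abs_of_nonneg (norm_nonneg c), div_mul_cancel₀ _ hc'.ne']
  have hd : |‖b‖ - ‖b₀‖| ≤ ‖b - b₀‖ := abs_norm_sub_norm_le b b₀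
  have h1t : (0:ℝ) < 1 + ‖b₀‖ := by positivity
  rcases eq_or_ne b b₀ with rfl | hbb
  · simp only [sub_self, norm_zero]; positivity
  have hdpos : (0:ℝ) < ‖b - b₀‖ := norm_pos_iff.2 (sub_ne_zero.2 hbb)
  set t := ‖b₀‖ with ht
  set u := ‖b‖ with hu
  set d := ‖b - b₀‖ with hdd
  rcases le_or_gt t (1/2) with hA | hB
  -- Case A : t ≤ 1/2
  · have h0 : (χ t / t) • b₀ = (0:F) := by rw [hχ0 t hA]; simp
    rw [h0, sub_zero, hnorm]
    have h8 : (2:ℝ) ≤ 12 * (1+t)⁻¹ := by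
      have h6 : (1:ℝ)+t ≤ 6 := by linarith
      calc (2:ℝ) = 12 * (6:ℝ)⁻¹ := by norm_num
        _ ≤ 12 * (1+t)⁻¹ := by gcongr
    rcases le_or_gt u (1/2) with hu2 | hu2
    · rw [hχ0 u hu2]; positivity
    · have h1 : χ u ≤ 2*u - 1 := hle u hu2.le
      have h2 : u - t ≤ d := (abs_le.1 hd).2
      have h3 : χ u ≤ 2*d := by linarith
      nlinarith [mul_le_mul_of_nonneg_right h8 hdpos.le]
  -- Case B : t > 1/2
  · have hb0 : b₀ ≠ 0 := by
      intro h; rw [h, norm_zero] at ht; simp [← ht] at hB; linarith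
    rcases le_or_gt ((1+t)/6) d with hBig | hSmall
    · -- d large: use that both terms have norm ≤ 1
      have h2' : ‖(χ u / u) • b - (χ t / t) • b₀‖ ≤ 2 := by
        calc ‖(χ u / u) • b - (χ t / t) • b₀‖ ≤ ‖(χ u / u) • b‖ + ‖(χ t / t) • b₀‖ :=
              norm_sub_le _ _
          _ = χ u + χ t := by rw [hnorm, hnorm]
          _ ≤ 2 := by have := (hχrange u).2; have := (hχrange t).2; linarith
      have e2 : 12 * (1+t)⁻¹ * ((1+t)/6) = 2 := by field_simp; ring
      calc ‖(χ u / u) • b - (χ t / t) • b₀‖ ≤ 2 := h2'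
        _ = 12 * (1+t)⁻¹ * ((1+t)/6) := e2.symm
        _ ≤ 12 * (1+t)⁻¹ * d := by gcongr
    · -- d small
      set r := (5*t - 1)/6 with hrdef
      have hr : (0:ℝ) < r := by rw [hrdef]; linarith
      have h2 : t - u ≤ d := (abs_le.1 hd).1 |> fun h => by linarith [(abs_le.1 hd).1]
      have hub : r < u := by
        have := (abs_le.1 hd).1
        rw [hrdef]; linarith
      have hbne : b ≠ 0 := by
        intro h; rw [h, norm_zero] at hu; linarith
      have hrt : r ≤ t := by rw [hrdef]; linarith
      have hrad : ‖u⁻¹ • b - t⁻¹ • b₀‖ ≤ d / r := radial hbne hb0 hr hub.le hrt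
      have hsplit : (χ u / u) • b - (χ t / t) • b₀ =
          (χ u - χ t) • (u⁻¹ • b) + (χ t) • ((u⁻¹ • b) - (t⁻¹ • b₀)) := by
        rw [div_eq_mul_inv, div_eq_mul_inv]
        module
      have hnb : ‖u⁻¹ • b‖ = 1 := by
        rw [norm_smul, norm_inv, norm_norm, ← hu, inv_mul_cancel₀ (by linarith : u ≠ 0)]
      have hbound : ‖(χ u / u) • b - (χ t / t) • b₀‖ ≤ |χ u - χ t| + χ t * (d / r) := by
        rw [hsplit]
        calc ‖(χ u - χ t) • (u⁻¹ • b) + (χ t) • ((u⁻¹ • b) - (t⁻¹ • b₀))‖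
            ≤ ‖(χ u - χ t) • (u⁻¹ • b)‖ + ‖(χ t) • ((u⁻¹ • b) - (t⁻¹ • b₀))‖ := norm_add_le _ _
          _ = |χ u - χ t| * 1 + χ t * ‖(u⁻¹ • b) - (t⁻¹ • b₀)‖ := by
              rw [norm_smul, hnb, norm_smul, Real.norm_eq_abs, Real.norm_eq_abs,
                abs_of_nonneg (hχrange t).1]
          _ ≤ |χ u - χ t| + χ t * (d / r) := by
              rw [mul_one]
              exact add_le_add (le_refl _) (mul_le_mul_of_nonneg_left hrad (hχrange t).1)
      rcases le_or_gt (7/5 : ℝ) t with hbig | hsmall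
      · -- t ≥ 7/5 : χ u = χ t = 1
        have hu1 : (1:ℝ) ≤ u := by rw [hrdef] at hub; linarith
        have hcu : χ u = 1 := hχ1 u hu1
        have hct : χ t = 1 := hχ1 t (by linarith)
        have key : d / r ≤ 12 * (1+t)⁻¹ * d := by
          have h1 : d * (1+t) ≤ (12 * d) * r := by rw [hrdef]; nlinarith
          have h2 : d / r ≤ 12 * d / (1+t) := (div_le_div_iff₀ hr h1t).2 h1
          calc d / r ≤ 12 * d / (1+t) := h2
            _ = 12 * (1+t)⁻¹ * d := by ring
        calc ‖(χ u / u) • b - (χ t / t) • b₀‖ ≤ |χ u - χ t| + χ t * (d / r) := hbound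
          _ = d / r := by rw [hcu, hct]; simp
          _ ≤ 12 * (1+t)⁻¹ * d := key
      · -- 1/2 < t < 7/5
        have hlip2 : |χ u - χ t| ≤ 2 * d := by
          calc |χ u - χ t| ≤ 2 * |u - t| := hchiLip u t
            _ ≤ 2 * d := by gcongr
        have hct1 : χ t ≤ 1 := (hχrange t).2
        have key : 2 * d + d / r ≤ 12 * (1+t)⁻¹ * d := by
          have e1 : 2 * d + d / r = (2*d*r + d) / r := by field_simp
          have h1 : (2*d*r + d) * (1+t) ≤ (12 * d) * r := by
            rw [hrdef]
            nlinarith [mul_pos hdpos (show (0:ℝ) < t - 1/2 by linarith),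
              mul_nonneg (mul_nonneg hdpos.le (show (0:ℝ) ≤ t - 1/2 by linarith))
                (show (0:ℝ) ≤ 7/5 - t by linarith)]
          have h2 : (2*d*r + d) / r ≤ 12 * d / (1+t) := (div_le_div_iff₀ hr h1t).2 h1
          rw [e1]
          calc (2*d*r + d) / r ≤ 12 * d / (1+t) := h2
            _ = 12 * (1+t)⁻¹ * d := by ring
        calc ‖(χ u / u) • b - (χ t / t) • b₀‖ ≤ |χ u - χ t| + χ t * (d / r) := hbound
          _ ≤ 2 * d + 1 * (d / r) :=
              add_le_add hlip2 (mul_le_mul_of_nonneg_right hct1 (div_nonneg hdpos.le hr.le))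
          _ = 2 * d + d / r := by ring
          _ ≤ 12 * (1+t)⁻¹ * d := key

end Aux


lemma normId {n : ℕ} (L : En n →L[ℝ] ℝ) :
    ‖L‖^2 = ∑ i, (L (EuclideanSpace.single i 1))^2 := by
  set w : En n := WithLp.toLp 2 (fun i => L (EuclideanSpace.single i 1) : Fin n → ℝ) with hw
  have hLw : ∀ v : En n, L v = (innerSL ℝ w) v := by
    intro v
    have hv : v = ∑ i, v i • EuclideanSpace.single i (1:ℝ) := by
      have := (EuclideanSpace.basisFun (Fin n) ℝ).sum_repr v
      simpa [EuclideanSpace.basisFun_apply, EuclideanSpace.basisFun_repr] using this.symm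
    rw [innerSL_apply_apply]
    rw [PiLp.inner_apply]
    conv_lhs => rw [hv]
    rw [map_sum]
    refine Finset.sum_congr rfl fun i _ => ?_
    rw [L.map_smul, smul_eq_mul]
    simp [hw, RCLike.inner_apply, mul_comm]
  have : L = innerSL ℝ w := ContinuousLinearMap.ext hLw
  rw [this, innerSL_apply_norm, EuclideanSpace.norm_eq,
    Real.sq_sqrt (by positivity)]
  simp [hw, sq_abs, EuclideanSpace.inner_single_right]

lemma sumPairs {n : ℕ} (f : Fin n → Fin n → ℝ) :
    ∑ j, ∑ k, (if j < k then f j k else 0) =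
      ∑ p : {p : Fin n × Fin n // p.1 < p.2}, f p.1.1 p.1.2 := by
  rw [← Finset.sum_product']
  rw [← Finset.sum_filter, Finset.univ_product_univ]
  rw [Finset.sum_subtype (p := fun p : Fin n × Fin n => p.1 < p.2)
    (Finset.univ.filter (fun p : Fin n × Fin n => p.1 < p.2))
    (by intro x; simp) (fun p => f p.1 p.2)]

lemma coordLe {ι : Type*} [Fintype ι] (w : EuclideanSpace ℝ ι) (p : ι) :
    |w p| ≤ ‖w‖ := by
  rw [EuclideanSpace.norm_eq]
  rw [← Real.sqrt_sq (abs_nonneg (w p))]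
  apply Real.sqrt_le_sqrt
  rw [sq_abs]
  have : (w p)^2 = ‖w p‖^2 := by rw [Real.norm_eq_abs, sq_abs]
  rw [this]
  exact Finset.single_le_sum (f := fun i => ‖w i‖^2) (fun i _ => by positivity)
    (Finset.mem_univ p)

lemma aeDiff {n : ℕ} {f : En n → ℝ}
    (h : ∀ x : En n, ∃ (K : NNReal) (t : Set (En n)), t ∈ nhds x ∧ LipschitzOnWith K f t) :
    ∀ᵐ x : En n ∂volume, DifferentiableAt ℝ f x := by
  rw [ae_iff]
  apply measure_null_of_locally_null
  intro x _
  obtain ⟨K, t, ht, hl⟩ := h x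
  obtain ⟨ε, hε, hball⟩ := Metric.mem_nhds_iff.1 ht
  have hlb : LipschitzOnWith K f (ball x ε) := hl.mono hball
  have h2 : ∀ᵐ y : En n ∂volume, y ∈ ball x ε → DifferentiableAt ℝ f y := by
    filter_upwards [hlb.ae_differentiableWithinAt_of_mem] with y hy hball2
    exact (hy hball2).differentiableAt (isOpen_ball.mem_nhds hball2)
  refine ⟨{y | ¬DifferentiableAt ℝ f y} ∩ ball x ε, ?_, ?_⟩
  · exact Filter.inter_mem self_mem_nhdsWithin
      (mem_nhdsWithin_of_mem_nhds (ball_mem_nhds x hε))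
  · apply measure_mono_null (t := {y | ¬ (y ∈ ball x ε → DifferentiableAt ℝ f y)})
    · intro y hy
      simp only [Set.mem_setOf_eq]
      intro hcon
      exact hy.1 (hcon hy.2)
    · exact h2

lemma normsq {ι : Type*} [Fintype ι] (w : EuclideanSpace ℝ ι) : ‖w‖^2 = ∑ i, (w i)^2 := by
  rw [EuclideanSpace.norm_eq, Real.sq_sqrt (by positivity)]
  exact Finset.sum_congr rfl fun i _ => by rw [Real.norm_eq_abs, sq_abs]


/-- the smoothed direction `A_{jk} = χ(|B|) B_{jk}/|B|` of a locally Lipschitz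
field `B` satisfies `|∇A| ≤ 12 (1+|B|)⁻¹ |∇B|` almost everywhere.  (In Lean `x/0 = 0`, so the
formula for `A` automatically vanishes where `|B| = 0`, and `χ(|B|) = 0` where `|B| ≤ 1/2`.) -/
theorem stmt11 {n : ℕ} (B : Fin n → Fin n → En n → ℝ)
    (hBlip : ∀ j k, ∀ x : En n, ∃ (K : NNReal) (t : Set (En n)), t ∈ nhds x ∧
      LipschitzOnWith K (B j k) t)
    (hBanti : ∀ j k x, B k j x = - B j k x)
    (χ : ℝ → ℝ) (hχlip : LipschitzWith 2 χ)
    (hχ0 : ∀ s ≤ (1/2 : ℝ), χ s = 0) (hχ1 : ∀ s ≥ (1 : ℝ), χ s = 1)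
    (hχmid : ∀ s ∈ Set.Icc (1/2 : ℝ) 1, χ s = 2 * s - 1)
    (hχrange : ∀ s, χ s ∈ Set.Icc (0:ℝ) 1) :
    ∀ᵐ x : En n ∂volume,
      Real.sqrt (∑ j, ∑ k, if j < k then
          ‖fderiv ℝ (fun y => χ (normB B y) * (B j k y / normB B y)) x‖ ^ 2 else 0) ≤
        12 * (1 + normB B x)⁻¹ *
          Real.sqrt (∑ j, ∑ k, if j < k then ‖fderiv ℝ (B j k) x‖ ^ 2 else 0) := by
  classical
  set bvec : En n → EuclideanSpace ℝ {p : Fin n × Fin n // p.1 < p.2} :=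
    fun y => WithLp.toLp 2 (fun (p : {p : Fin n × Fin n // p.1 < p.2}) => B p.1.1 p.1.2 y) with hbvec
  have hnormB : ∀ y, normB B y = ‖bvec y‖ := by
    intro y
    rw [normB, EuclideanSpace.norm_eq, sumPairs (fun j k => (B j k y)^2)]
    congr 1
    refine Finset.sum_congr rfl fun p _ => ?_
    rw [Real.norm_eq_abs, sq_abs]
  have hcoord : ∀ (p : {p : Fin n × Fin n // p.1 < p.2}) (y : En n),
      χ (normB B y) * (B p.1.1 p.1.2 y / normB B y)
        = ((χ ‖bvec y‖ / ‖bvec y‖) • bvec y) p := by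
    intro p y
    have h1 : ((χ ‖bvec y‖ / ‖bvec y‖) • bvec y) p
        = (χ ‖bvec y‖ / ‖bvec y‖) * bvec y p := rfl
    have h2 : bvec y p = B p.1.1 p.1.2 y := rfl
    rw [h1, h2, ← hnormB]
    ring
  -- local Lipschitz property of the A components
  have hAlip : ∀ (p : {p : Fin n × Fin n // p.1 < p.2}) (x₀ : En n),
      ∃ (K : NNReal) (t : Set (En n)), t ∈ nhds x₀ ∧
        LipschitzOnWith K (fun y => χ (normB B y) * (B p.1.1 p.1.2 y / normB B y)) t := by
    intro p x₀
    choose K T hT hLip using fun q : {p : Fin n × Fin n // p.1 < p.2} => hBlip q.1.1 q.1.2 x₀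
    set Ks := Real.sqrt (∑ q : {p : Fin n × Fin n // p.1 < p.2}, (K q : ℝ)^2) with hKs
    have hKs0 : 0 ≤ Ks := Real.sqrt_nonneg _
    refine ⟨Real.toNNReal (12 * Ks), ⋂ q, T q, Filter.iInter_mem.2 hT, ?_⟩
    have hbv : ∀ y ∈ ⋂ q, T q, ∀ z ∈ ⋂ q, T q, ‖bvec y - bvec z‖ ≤ Ks * dist y z := by
      intro y hy z hz
      rw [EuclideanSpace.norm_eq]
      have hcomp : ∀ q : {p : Fin n × Fin n // p.1 < p.2},
          ‖(bvec y - bvec z) q‖ ^ 2 ≤ ((K q : ℝ) * dist y z)^2 := by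
        intro q
        have h1 : dist (B q.1.1 q.1.2 y) (B q.1.1 q.1.2 z) ≤ K q * dist y z :=
          (hLip q).dist_le_mul y (Set.mem_iInter.1 hy q) z (Set.mem_iInter.1 hz q)
        have h2 : ‖(bvec y - bvec z) q‖ = dist (B q.1.1 q.1.2 y) (B q.1.1 q.1.2 z) := by
          rw [Real.dist_eq, Real.norm_eq_abs]; rfl
        rw [h2]
        exact pow_le_pow_left₀ dist_nonneg h1 2
      calc Real.sqrt (∑ q, ‖(bvec y - bvec z) q‖^2)
          ≤ Real.sqrt (∑ q : {p : Fin n × Fin n // p.1 < p.2}, ((K q : ℝ) * dist y z)^2) :=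
            Real.sqrt_le_sqrt (Finset.sum_le_sum fun q _ => hcomp q)
        _ = Ks * dist y z := by
            have e1 : ∑ q : {p : Fin n × Fin n // p.1 < p.2}, ((K q : ℝ) * dist y z)^2
                = (∑ q : {p : Fin n × Fin n // p.1 < p.2}, (K q : ℝ)^2) * dist y z ^ 2 := by
              rw [Finset.sum_mul]
              exact Finset.sum_congr rfl fun q _ => by ring
            rw [e1, Real.sqrt_mul (by positivity), Real.sqrt_sq dist_nonneg, hKs]
    rw [lipschitzOnWith_iff_dist_le_mul]
    intro y hy z hz
    rw [Real.dist_eq]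
    have hco : χ (normB B y) * (B p.1.1 p.1.2 y / normB B y)
          - χ (normB B z) * (B p.1.1 p.1.2 z / normB B z)
        = ((χ ‖bvec y‖ / ‖bvec y‖) • bvec y - (χ ‖bvec z‖ / ‖bvec z‖) • bvec z) p := by
      rw [hcoord p y, hcoord p z]; rfl
    have h1le : (1 + ‖bvec z‖)⁻¹ ≤ 1 := by
      rw [inv_le_one_iff₀]
      right; linarith [norm_nonneg (bvec z)]
    calc |χ (normB B y) * (B p.1.1 p.1.2 y / normB B y)
          - χ (normB B z) * (B p.1.1 p.1.2 z / normB B z)|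
        = |((χ ‖bvec y‖ / ‖bvec y‖) • bvec y - (χ ‖bvec z‖ / ‖bvec z‖) • bvec z) p| := by
          rw [hco]
      _ ≤ ‖(χ ‖bvec y‖ / ‖bvec y‖) • bvec y - (χ ‖bvec z‖ / ‖bvec z‖) • bvec z‖ := coordLe _ p
      _ ≤ 12 * (1 + ‖bvec z‖)⁻¹ * ‖bvec y - bvec z‖ :=
          star_lemma χ hχlip hχ0 hχ1 hχmid hχrange _ _
      _ ≤ 12 * 1 * ‖bvec y - bvec z‖ := by
          exact mul_le_mul_of_nonneg_right
            (mul_le_mul_of_nonneg_left h1le (by norm_num)) (norm_nonneg _)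
      _ ≤ 12 * 1 * (Ks * dist y z) := by
          exact mul_le_mul_of_nonneg_left (hbv y hy z hz) (by norm_num)
      _ ≤ Real.toNNReal (12 * Ks) * dist y z := by
          have := Real.le_coe_toNNReal (12 * Ks)
          nlinarith [dist_nonneg (x := y) (y := z)]
  have hDiffB : ∀ᵐ x : En n ∂volume, ∀ j k, DifferentiableAt ℝ (B j k) x :=
    ae_all_iff.2 fun j => ae_all_iff.2 fun k => aeDiff (hBlip j k)
  have hDiffA : ∀ᵐ x : En n ∂volume, ∀ p : {p : Fin n × Fin n // p.1 < p.2},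
      DifferentiableAt ℝ (fun y => χ (normB B y) * (B p.1.1 p.1.2 y / normB B y)) x :=
    ae_all_iff.2 fun p => aeDiff (hAlip p)
  filter_upwards [hDiffB, hDiffA] with x hBx hAx
  have hC0 : (0:ℝ) ≤ 12 * (1 + normB B x)⁻¹ := by
    have := hnormB x
    have h0 : (0:ℝ) ≤ normB B x := by rw [this]; positivity
    positivity
  -- identities for squared norms of differences
  have idA : ∀ y z : En n,
      ‖(χ ‖bvec y‖ / ‖bvec y‖) • bvec y - (χ ‖bvec z‖ / ‖bvec z‖) • bvec z‖^2
        = ∑ p : {p : Fin n × Fin n // p.1 < p.2},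
            (χ (normB B y) * (B p.1.1 p.1.2 y / normB B y)
              - χ (normB B z) * (B p.1.1 p.1.2 z / normB B z))^2 := by
    intro y z
    rw [normsq]
    refine Finset.sum_congr rfl fun p _ => ?_
    rw [hcoord p y, hcoord p z]
    rfl
  have idB : ∀ y z : En n, ‖bvec y - bvec z‖^2
      = ∑ p : {p : Fin n × Fin n // p.1 < p.2}, (B p.1.1 p.1.2 y - B p.1.1 p.1.2 z)^2 := by
    intro y z
    rw [normsq]
    rfl
  -- directional derivative estimate
  have hdir : ∀ v : En n,
      ∑ p : {p : Fin n × Fin n // p.1 < p.2},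
          (fderiv ℝ (fun y => χ (normB B y) * (B p.1.1 p.1.2 y / normB B y)) x v)^2
        ≤ (12 * (1 + normB B x)⁻¹)^2
            * ∑ p : {p : Fin n × Fin n // p.1 < p.2}, (fderiv ℝ (B p.1.1 p.1.2) x v)^2 := by
    intro v
    have hline : HasDerivAt (fun s : ℝ => x + s • v) v 0 := by
      simpa using ((hasDerivAt_id (0:ℝ)).smul_const v).const_add x
    have key : ∀ (g : En n → ℝ), DifferentiableAt ℝ g x →
        Tendsto (fun s : ℝ => (g (x + s • v) - g x)/s) (𝓝[≠] (0:ℝ)) (𝓝 (fderiv ℝ g x v)) := by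
      intro g hg
      have h2 : HasFDerivAt g (fderiv ℝ g x) ((fun s : ℝ => x + s • v) 0) := by
        simpa using hg.hasFDerivAt
      have h1 : HasDerivAt (fun s : ℝ => g (x + s • v)) (fderiv ℝ g x v) 0 :=
        h2.comp_hasDerivAt 0 hline
      have h3 := hasDerivAt_iff_tendsto_slope.1 h1
      have h4 : (fun s : ℝ => (g (x + s • v) - g x)/s)
          = slope (fun s : ℝ => g (x + s • v)) 0 := by
        funext s
        rw [slope_def_field]
        simp
      rw [h4]
      exact h3
    have hqA : Tendsto (fun s : ℝ => ∑ p : {p : Fin n × Fin n // p.1 < p.2},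
        (((fun y => χ (normB B y) * (B p.1.1 p.1.2 y / normB B y)) (x + s • v)
          - (fun y => χ (normB B y) * (B p.1.1 p.1.2 y / normB B y)) x)/s)^2) (𝓝[≠] (0:ℝ))
        (𝓝 (∑ p : {p : Fin n × Fin n // p.1 < p.2},
          (fderiv ℝ (fun y => χ (normB B y) * (B p.1.1 p.1.2 y / normB B y)) x v)^2)) :=
      tendsto_finset_sum _ fun p _ => ((key _ (hAx p)).pow 2)
    have hqB : Tendsto (fun s : ℝ => ∑ p : {p : Fin n × Fin n // p.1 < p.2},
        ((B p.1.1 p.1.2 (x + s • v) - B p.1.1 p.1.2 x)/s)^2) (𝓝[≠] (0:ℝ))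
        (𝓝 (∑ p : {p : Fin n × Fin n // p.1 < p.2}, (fderiv ℝ (B p.1.1 p.1.2) x v)^2)) :=
      tendsto_finset_sum _ fun p _ => ((key _ (hBx p.1.1 p.1.2)).pow 2)
    refine le_of_tendsto_of_tendsto hqA (hqB.const_mul ((12 * (1 + normB B x)⁻¹)^2)) ?_
    filter_upwards [self_mem_nhdsWithin] with s hs
    have hs0 : s ≠ 0 := hs
    have hs2 : (0:ℝ) < s^2 := lt_of_le_of_ne (sq_nonneg s) (Ne.symm (pow_ne_zero 2 hs0))
    have hstar := star_lemma χ hχlip hχ0 hχ1 hχmid hχrange (bvec (x + s • v)) (bvec x)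
    have hsq : ‖(χ ‖bvec (x + s • v)‖ / ‖bvec (x + s • v)‖) • bvec (x + s • v)
          - (χ ‖bvec x‖ / ‖bvec x‖) • bvec x‖^2
        ≤ (12 * (1 + ‖bvec x‖)⁻¹)^2 * ‖bvec (x + s • v) - bvec x‖^2 := by
      have := pow_le_pow_left₀ (norm_nonneg _) hstar 2
      calc ‖(χ ‖bvec (x + s • v)‖ / ‖bvec (x + s • v)‖) • bvec (x + s • v)
            - (χ ‖bvec x‖ / ‖bvec x‖) • bvec x‖^2
          ≤ (12 * (1 + ‖bvec x‖)⁻¹ * ‖bvec (x + s • v) - bvec x‖)^2 := this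
        _ = (12 * (1 + ‖bvec x‖)⁻¹)^2 * ‖bvec (x + s • v) - bvec x‖^2 := mul_pow _ _ 2
    have hAB : ∑ p : {p : Fin n × Fin n // p.1 < p.2},
        (χ (normB B (x + s • v)) * (B p.1.1 p.1.2 (x + s • v) / normB B (x + s • v))
          - χ (normB B x) * (B p.1.1 p.1.2 x / normB B x))^2
        ≤ (12 * (1 + normB B x)⁻¹)^2
            * ∑ p : {p : Fin n × Fin n // p.1 < p.2},
                (B p.1.1 p.1.2 (x + s • v) - B p.1.1 p.1.2 x)^2 := by
      rw [← idA (x + s • v) x, ← idB (x + s • v) x, hnormB x]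
      exact hsq
    simp only [div_pow, ← Finset.sum_div]
    calc (∑ p : {p : Fin n × Fin n // p.1 < p.2},
          (χ (normB B (x + s • v)) * (B p.1.1 p.1.2 (x + s • v) / normB B (x + s • v))
            - χ (normB B x) * (B p.1.1 p.1.2 x / normB B x))^2) / s^2
        ≤ ((12 * (1 + normB B x)⁻¹)^2
            * ∑ p : {p : Fin n × Fin n // p.1 < p.2},
                (B p.1.1 p.1.2 (x + s • v) - B p.1.1 p.1.2 x)^2) / s^2 := by
          gcongr
      _ = (12 * (1 + normB B x)⁻¹)^2
            * ((∑ p : {p : Fin n × Fin n // p.1 < p.2},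
                (B p.1.1 p.1.2 (x + s • v) - B p.1.1 p.1.2 x)^2) / s^2) := by
          rw [mul_div_assoc]
  -- sum over directions
  have hsum : ∑ p : {p : Fin n × Fin n // p.1 < p.2},
      ‖fderiv ℝ (fun y => χ (normB B y) * (B p.1.1 p.1.2 y / normB B y)) x‖^2
      ≤ (12 * (1 + normB B x)⁻¹)^2
          * ∑ p : {p : Fin n × Fin n // p.1 < p.2}, ‖fderiv ℝ (B p.1.1 p.1.2) x‖^2 := by
    calc ∑ p : {p : Fin n × Fin n // p.1 < p.2},
        ‖fderiv ℝ (fun y => χ (normB B y) * (B p.1.1 p.1.2 y / normB B y)) x‖^2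
        = ∑ p : {p : Fin n × Fin n // p.1 < p.2}, ∑ i : Fin n,
            (fderiv ℝ (fun y => χ (normB B y) * (B p.1.1 p.1.2 y / normB B y)) x
              (EuclideanSpace.single i 1))^2 :=
          Finset.sum_congr rfl fun p _ => normId _
      _ = ∑ i : Fin n, ∑ p : {p : Fin n × Fin n // p.1 < p.2},
            (fderiv ℝ (fun y => χ (normB B y) * (B p.1.1 p.1.2 y / normB B y)) x
              (EuclideanSpace.single i 1))^2 := Finset.sum_comm
      _ ≤ ∑ i : Fin n, (12 * (1 + normB B x)⁻¹)^2
            * ∑ p : {p : Fin n × Fin n // p.1 < p.2},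
                (fderiv ℝ (B p.1.1 p.1.2) x (EuclideanSpace.single i 1))^2 :=
          Finset.sum_le_sum fun i _ => hdir (EuclideanSpace.single i 1)
      _ = (12 * (1 + normB B x)⁻¹)^2 * ∑ i : Fin n, ∑ p : {p : Fin n × Fin n // p.1 < p.2},
            (fderiv ℝ (B p.1.1 p.1.2) x (EuclideanSpace.single i 1))^2 := by
          rw [Finset.mul_sum]
      _ = (12 * (1 + normB B x)⁻¹)^2 * ∑ p : {p : Fin n × Fin n // p.1 < p.2}, ∑ i : Fin n,
            (fderiv ℝ (B p.1.1 p.1.2) x (EuclideanSpace.single i 1))^2 := by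
          rw [Finset.sum_comm]
      _ = (12 * (1 + normB B x)⁻¹)^2
            * ∑ p : {p : Fin n × Fin n // p.1 < p.2}, ‖fderiv ℝ (B p.1.1 p.1.2) x‖^2 := by
          congr 1
          exact Finset.sum_congr rfl fun p _ => (normId _).symm
  -- conclusion
  rw [sumPairs (fun j k => ‖fderiv ℝ (fun y => χ (normB B y) * (B j k y / normB B y)) x‖^2),
    sumPairs (fun j k => ‖fderiv ℝ (B j k) x‖^2)]
  calc Real.sqrt (∑ p : {p : Fin n × Fin n // p.1 < p.2},
        ‖fderiv ℝ (fun y => χ (normB B y) * (B p.1.1 p.1.2 y / normB B y)) x‖^2)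
      ≤ Real.sqrt ((12 * (1 + normB B x)⁻¹)^2
          * ∑ p : {p : Fin n × Fin n // p.1 < p.2}, ‖fderiv ℝ (B p.1.1 p.1.2) x‖^2) :=
        Real.sqrt_le_sqrt hsum
    _ = 12 * (1 + normB B x)⁻¹ * Real.sqrt (∑ p : {p : Fin n × Fin n // p.1 < p.2},
          ‖fderiv ℝ (B p.1.1 p.1.2) x‖^2) := by
        rw [Real.sqrt_mul (sq_nonneg _), Real.sqrt_sq hC0]
end
end

section
/- Let a be a C¹ magnetic potential in ℝⁿ, P_j = (1/i)∂_j + a_j, and let A_{kj} be real constants with A_{kj} = −A_{jk} and Σ_{j<k} A_{jk}² = 1. Suppose Σ_{k<j} A_{kj} B_{kj}(y) ≥ r₀ for all y in a ball B(γ,r) (B_{kj} the magnetic field of a). Then for every u ∈ C_c^∞(B(γ,r)): Σ_{j=1}^n ‖P_j u‖² ≥ (r₀/(n−1)) ‖u‖², with L² norms over B(γ,r). -/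
open MeasureTheory Metric Filter

noncomputable section

namespace Stmt12Aux


variable {n : ℕ}

lemma pd_continuous {f : En n → ℂ} (hf : ContDiff ℝ 1 f) (j : Fin n) :
    Continuous (pd f j) :=
  (ContinuousLinearMap.apply ℝ ℂ (EuclideanSpace.single j 1)).continuous.comp
    (hf.continuous_fderiv one_ne_zero)

lemma pdR_continuous {f : En n → ℝ} (hf : ContDiff ℝ 1 f) (j : Fin n) :
    Continuous (pdR f j) :=
  (ContinuousLinearMap.apply ℝ ℝ (EuclideanSpace.single j 1)).continuous.comp
    (hf.continuous_fderiv one_ne_zero)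

lemma pd_hasCompactSupport {f : En n → ℂ} (hf : HasCompactSupport f) (j : Fin n) :
    HasCompactSupport (pd f j) :=
  (hf.fderiv ℝ).comp_left (g := fun L : En n →L[ℝ] ℂ => L (EuclideanSpace.single j 1)) rfl

lemma pd_contDiff {f : En n → ℂ} (hf : ContDiff ℝ (⊤ : ℕ∞) f) (j : Fin n) :
    ContDiff ℝ (⊤ : ℕ∞) (pd f j) :=
  (hf.fderiv_right (by simp)).clm_apply contDiff_const

lemma ibpR (g : En n → ℝ) (hg : ContDiff ℝ 1 g) (hc : HasCompactSupport g) (v : En n) :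
    ∫ x, fderiv ℝ g x v = 0 := by
  obtain ⟨C, hC⟩ := hg.lipschitzWith_of_hasCompactSupport hc one_ne_zero
  have h := LipschitzWith.integral_lineDeriv_mul_eq (μ := volume)
    (LipschitzWith.const' (K := 0) (1:ℝ)) hC hc (-v)
  have hz : ∀ x : En n, lineDeriv ℝ (fun _ : En n => (1:ℝ)) x (-v) = 0 := by
    intro x; simp [lineDeriv]
  have h2 : ∀ x : En n, lineDeriv ℝ g x (- -v) = fderiv ℝ g x v := fun x => by
    rw [neg_neg]; exact ((hg.differentiable one_ne_zero) x).lineDeriv_eq_fderiv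
  simp only [hz, zero_mul, integral_zero, mul_one, h2] at h
  exact h.symm

lemma ibpC (φ : En n → ℂ) (hφ : ContDiff ℝ 1 φ) (hc : HasCompactSupport φ) (j : Fin n) :
    ∫ x, pd φ j x = 0 := by
  set v := EuclideanSpace.single j (1:ℝ) with hv
  have hd : Differentiable ℝ φ := hφ.differentiable one_ne_zero
  have hre : ContDiff ℝ 1 fun x => (φ x).re := Complex.reCLM.contDiff.comp hφ
  have him : ContDiff ℝ 1 fun x => (φ x).im := Complex.imCLM.contDiff.comp hφ
  have hcre : HasCompactSupport fun x => (φ x).re :=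
    hc.comp_left (g := Complex.re) rfl
  have hcim : HasCompactSupport fun x => (φ x).im :=
    hc.comp_left (g := Complex.im) rfl
  have h1 : ∀ x, fderiv ℝ (fun x => (φ x).re) x v = (fderiv ℝ φ x v).re := by
    intro x
    have : fderiv ℝ (fun x => (φ x).re) x = Complex.reCLM.comp (fderiv ℝ φ x) :=
      (Complex.reCLM.hasFDerivAt.comp x (hd x).hasFDerivAt).fderiv
    rw [this]; rfl
  have h2 : ∀ x, fderiv ℝ (fun x => (φ x).im) x v = (fderiv ℝ φ x v).im := by
    intro x
    have : fderiv ℝ (fun x => (φ x).im) x = Complex.imCLM.comp (fderiv ℝ φ x) :=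
      (Complex.imCLM.hasFDerivAt.comp x (hd x).hasFDerivAt).fderiv
    rw [this]; rfl
  have hint : Integrable (pd φ j) :=
    (pd_continuous hφ j).integrable_of_hasCompactSupport (pd_hasCompactSupport hc j)
  have e1 : ∫ x, (pd φ j x).re = 0 := by
    calc ∫ x, (pd φ j x).re = ∫ x, fderiv ℝ (fun x => (φ x).re) x v :=
          integral_congr_ae (Filter.Eventually.of_forall fun x => (h1 x).symm)
      _ = 0 := ibpR _ hre hcre v
  have e2 : ∫ x, (pd φ j x).im = 0 := by
    calc ∫ x, (pd φ j x).im = ∫ x, fderiv ℝ (fun x => (φ x).im) x v :=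
          integral_congr_ae (Filter.Eventually.of_forall fun x => (h2 x).symm)
      _ = 0 := ibpR _ him hcim v
  have r1 : (∫ x, pd φ j x).re = 0 := by
    have := integral_re (𝕜 := ℂ) hint
    simp only [RCLike.re_to_complex] at this
    rw [← this]; exact e1
  have r2 : (∫ x, pd φ j x).im = 0 := by
    have := integral_im (𝕜 := ℂ) hint
    simp only [RCLike.im_to_complex] at this
    rw [← this]; exact e2
  exact Complex.ext (by simpa using r1) (by simpa using r2)

lemma pd_mul {f g : En n → ℂ} {x : En n} (hf : DifferentiableAt ℝ f x)
    (hg : DifferentiableAt ℝ g x) (j : Fin n) :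
    pd (fun y => f y * g y) j x = f x * pd g j x + g x * pd f j x := by
  unfold pd
  rw [fderiv_fun_mul hf hg]
  simp [smul_eq_mul]

lemma pd_conj {u : En n → ℂ} {x : En n} (hu : DifferentiableAt ℝ u x) (j : Fin n) :
    pd (fun y => (starRingEnd ℂ) (u y)) j x = (starRingEnd ℂ) (pd u j x) := by
  unfold pd
  have h : HasFDerivAt (fun y => (starRingEnd ℂ) (u y))
      ((Complex.conjCLE.toContinuousLinearMap).comp (fderiv ℝ u x)) x := by
    exact (Complex.conjCLE.toContinuousLinearMap.hasFDerivAt).comp x hu.hasFDerivAt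
  rw [h.fderiv]
  rfl

lemma pd_ofReal {f : En n → ℝ} {x : En n} (hf : DifferentiableAt ℝ f x) (j : Fin n) :
    pd (fun y => ((f y : ℝ) : ℂ)) j x = ((pdR f j x : ℝ) : ℂ) := by
  unfold pd pdR
  have h : HasFDerivAt (fun y => ((f y : ℝ) : ℂ))
      (Complex.ofRealCLM.comp (fderiv ℝ f x)) x :=
    (Complex.ofRealCLM.hasFDerivAt).comp x hf.hasFDerivAt
  rw [h.fderiv]
  rfl

lemma differentiable_conj_comp {u : En n → ℂ} (hu : Differentiable ℝ u) :
    Differentiable ℝ (fun y => (starRingEnd ℂ) (u y)) :=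
  Complex.conjCLE.toContinuousLinearMap.differentiable.comp hu

lemma contDiff_conj_comp {u : En n → ℂ} {m : WithTop ℕ∞} (hu : ContDiff ℝ m u) :
    ContDiff ℝ m (fun y => (starRingEnd ℂ) (u y)) :=
  Complex.conjCLE.toContinuousLinearMap.contDiff.comp hu

lemma pd_pd_comm {u : En n → ℂ} (hu : ContDiff ℝ (⊤ : ℕ∞) u) (x : En n) (j k : Fin n) :
    pd (fun y => pd u j y) k x = pd (fun y => pd u k y) j x := by
  have hfd : Differentiable ℝ (fderiv ℝ u) :=
    (hu.fderiv_right (m := (⊤ : ℕ∞)) ((by simp))).differentiable (by simp)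
  have hsymm := (hu.contDiffAt (x := x)).isSymmSndFDerivAt (by rw [minSmoothness_of_isRCLikeNormedField]; exact WithTop.coe_le_coe.mpr le_top)
  have key : ∀ p q : Fin n, pd (fun y => pd u p y) q x
      = fderiv ℝ (fderiv ℝ u) x (EuclideanSpace.single q 1) (EuclideanSpace.single p 1) := by
    intro p q
    unfold pd
    rw [fderiv_clm_apply (hfd x) (differentiableAt_const _)]
    simp
  rw [key j k, key k j, hsymm]

lemma master (a : Fin n → En n → ℝ) (ha : ∀ j, ContDiff ℝ 1 (a j))
    (u : En n → ℂ) (hu : ContDiff ℝ (⊤ : ℕ∞) u) (k j : Fin n) (x : En n) :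
    Complex.I * (pd (fun y => ((a j y : ℝ) : ℂ) * ((starRingEnd ℂ) (u y) * u y)) k x
             - pd (fun y => ((a k y : ℝ) : ℂ) * ((starRingEnd ℂ) (u y) * u y)) j x)
    + (pd (fun y => (starRingEnd ℂ) (u y) * pd u j y) k x
       - pd (fun y => (starRingEnd ℂ) (u y) * pd u k y) j x)
    = Complex.I * ((Bfield a k j x * ‖u x‖^2 : ℝ) : ℂ)
      + ((starRingEnd ℂ) (magP a k u x) * magP a j u x
         - (starRingEnd ℂ) ((starRingEnd ℂ) (magP a k u x) * magP a j u x)) := by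
  have hud : Differentiable ℝ u := hu.differentiable (by simp)
  have hcu : DifferentiableAt ℝ (fun y => (starRingEnd ℂ) (u y)) x :=
    (differentiable_conj_comp hud) x
  have hcuu : DifferentiableAt ℝ (fun y => (starRingEnd ℂ) (u y) * u y) x :=
    hcu.mul (hud x)
  have hajC : DifferentiableAt ℝ (fun y => ((a j y : ℝ) : ℂ)) x :=
    Complex.ofRealCLM.differentiable.comp (((ha j).differentiable one_ne_zero)) x
  have hakC : DifferentiableAt ℝ (fun y => ((a k y : ℝ) : ℂ)) x :=
    Complex.ofRealCLM.differentiable.comp (((ha k).differentiable one_ne_zero)) x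
  have hpdj : DifferentiableAt ℝ (fun y => pd u j y) x :=
    ((pd_contDiff hu j).differentiable (by simp)) x
  have hpdk : DifferentiableAt ℝ (fun y => pd u k y) x :=
    ((pd_contDiff hu k).differentiable (by simp)) x
  rw [pd_mul hajC hcuu k, pd_mul hakC hcuu j,
      pd_mul hcu hpdj k, pd_mul hcu hpdk j,
      pd_mul hcu (hud x) k, pd_mul hcu (hud x) j,
      pd_conj (hud x) k, pd_conj (hud x) j,
      pd_ofReal (((ha j).differentiable one_ne_zero).differentiableAt) k,
      pd_ofReal (((ha k).differentiable one_ne_zero).differentiableAt) j,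
      pd_pd_comm hu x j k]
  have hw : ((‖u x‖^2 : ℝ) : ℂ) = (starRingEnd ℂ) (u x) * u x := by
    rw [mul_comm, Complex.mul_conj']
    push_cast
    ring
  unfold magP Bfield
  rw [Complex.ofReal_mul, hw]
  simp only [map_add, map_mul, map_sub, map_neg, Complex.conj_I, Complex.conj_conj,
    Complex.conj_ofReal, Complex.ofReal_sub]
  linear_combination (((starRingEnd ℂ) (pd u k x)) * pd u j x
    - pd u k x * (starRingEnd ℂ) (pd u j x)) * Complex.I_sq

lemma integral_ofRealC {α : Type*} [MeasurableSpace α] {μ : Measure α} (f : α → ℝ) :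
    ∫ x, ((f x : ℝ) : ℂ) ∂μ = ((∫ x, f x ∂μ : ℝ) : ℂ) :=
  integral_ofReal

lemma magP_continuous (a : Fin n → En n → ℝ) (ha : ∀ j, ContDiff ℝ 1 (a j))
    (u : En n → ℂ) (hu : ContDiff ℝ (⊤ : ℕ∞) u) (j : Fin n) : Continuous (magP a j u) :=
  (continuous_const.mul (pd_continuous (hu.of_le (by simp)) j)).add
    ((Complex.continuous_ofReal.comp (ha j).continuous).mul hu.continuous)

lemma magP_hasCompactSupport (a : Fin n → En n → ℝ) (u : En n → ℂ)
    (hc : HasCompactSupport u) (j : Fin n) : HasCompactSupport (magP a j u) :=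
  ((pd_hasCompactSupport hc j).mul_left).add (hc.mul_left)

lemma key_id (a : Fin n → En n → ℝ) (ha : ∀ j, ContDiff ℝ 1 (a j))
    (u : En n → ℂ) (hu : ContDiff ℝ (⊤ : ℕ∞) u) (hc : HasCompactSupport u) (k j : Fin n) :
    ∫ x, Bfield a k j x * ‖u x‖^2
      = -2 * ∫ x, ((starRingEnd ℂ) (magP a k u x) * magP a j u x).im := by
  have hu1 : ContDiff ℝ 1 u := hu.of_le (by simp)
  set Φ : En n → ℂ := fun y => ((a j y : ℝ) : ℂ) * ((starRingEnd ℂ) (u y) * u y) with hΦdef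
  set Ψ : En n → ℂ := fun y => ((a k y : ℝ) : ℂ) * ((starRingEnd ℂ) (u y) * u y) with hΨdef
  set G : En n → ℂ := fun y => (starRingEnd ℂ) (u y) * pd u j y with hGdef
  set H : En n → ℂ := fun y => (starRingEnd ℂ) (u y) * pd u k y with hHdef
  have hΦ : ContDiff ℝ 1 Φ :=
    (Complex.ofRealCLM.contDiff.comp (ha j)).mul ((contDiff_conj_comp hu1).mul hu1)
  have hΨ : ContDiff ℝ 1 Ψ :=
    (Complex.ofRealCLM.contDiff.comp (ha k)).mul ((contDiff_conj_comp hu1).mul hu1)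
  have hG : ContDiff ℝ 1 G :=
    (contDiff_conj_comp hu1).mul ((pd_contDiff hu j).of_le (by simp))
  have hH : ContDiff ℝ 1 H :=
    (contDiff_conj_comp hu1).mul ((pd_contDiff hu k).of_le (by simp))
  have hcuu : HasCompactSupport (fun y => (starRingEnd ℂ) (u y) * u y) :=
    hc.comp_left (g := fun z : ℂ => (starRingEnd ℂ) z * z) (by simp)
  have hΦc : HasCompactSupport Φ := hcuu.mul_left
  have hΨc : HasCompactSupport Ψ := hcuu.mul_left
  have hcu : HasCompactSupport (fun y => (starRingEnd ℂ) (u y)) :=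
    hc.comp_left (g := (starRingEnd ℂ)) (map_zero _)
  have hGc : HasCompactSupport G := hcu.mul_right
  have hHc : HasCompactSupport H := hcu.mul_right
  have intΦ : Integrable (pd Φ k) :=
    (pd_continuous hΦ k).integrable_of_hasCompactSupport (pd_hasCompactSupport hΦc k)
  have intΨ : Integrable (pd Ψ j) :=
    (pd_continuous hΨ j).integrable_of_hasCompactSupport (pd_hasCompactSupport hΨc j)
  have intG : Integrable (pd G k) :=
    (pd_continuous hG k).integrable_of_hasCompactSupport (pd_hasCompactSupport hGc k)
  have intH : Integrable (pd H j) :=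
    (pd_continuous hH j).integrable_of_hasCompactSupport (pd_hasCompactSupport hHc j)
  set g : En n → ℂ := fun x => (starRingEnd ℂ) (magP a k u x) * magP a j u x with hgdef
  have hgcont : Continuous g :=
    (Complex.conjCLE.continuous.comp (magP_continuous a ha u hu k)).mul
      (magP_continuous a ha u hu j)
  have hgsupp : HasCompactSupport g :=
    ((magP_hasCompactSupport a u hc k).comp_left
      (g := (starRingEnd ℂ)) (map_zero _)).mul_right
  set X : ℝ := ∫ x, Bfield a k j x * ‖u x‖^2 with hX
  set T : ℝ := ∫ x, (g x).im with hT
  have contB : Continuous (fun x => Bfield a k j x * ‖u x‖^2) := by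
    apply Continuous.mul
    · exact (pdR_continuous (ha j) k).sub (pdR_continuous (ha k) j)
    · exact (hu.continuous.norm).pow 2
  have suppB : HasCompactSupport (fun x => Bfield a k j x * ‖u x‖^2) :=
    (hc.comp_left (g := fun z : ℂ => ‖z‖^2) (by simp)).mul_left
  have int1 : Integrable (fun x => Complex.I * ((Bfield a k j x * ‖u x‖^2 : ℝ) : ℂ)) := by
    apply Continuous.integrable_of_hasCompactSupport
    · exact continuous_const.mul (Complex.continuous_ofReal.comp contB)
    · exact suppB.comp_left (g := fun r : ℝ => Complex.I * (r : ℂ)) (by simp)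
  have intg : Integrable g := hgcont.integrable_of_hasCompactSupport hgsupp
  have intcg : Integrable (fun x => (starRingEnd ℂ) (g x)) := by
    apply Continuous.integrable_of_hasCompactSupport
    · exact Complex.conjCLE.continuous.comp hgcont
    · exact hgsupp.comp_left (g := (starRingEnd ℂ)) (map_zero _)
  have intB : Integrable (fun x => Bfield a k j x * ‖u x‖^2) :=
    contB.integrable_of_hasCompactSupport suppB
  have intIm : Integrable (fun x => (g x).im) := by
    apply Continuous.integrable_of_hasCompactSupport
    · exact Complex.continuous_im.comp hgcont
    · exact hgsupp.comp_left (g := Complex.im) rfl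
  -- the integral of the LHS of `master` vanishes
  have hzero : ∫ x, (Complex.I * (pd Φ k x - pd Ψ j x) + (pd G k x - pd H j x)) = 0 := by
    have i1 : Integrable (fun x => Complex.I * (pd Φ k x - pd Ψ j x)) :=
      (intΦ.sub intΨ).const_mul Complex.I
    have i2 : Integrable (fun x => pd G k x - pd H j x) := intG.sub intH
    rw [integral_add i1 i2,
      integral_const_mul, integral_sub intΦ intΨ, integral_sub intG intH,
      ibpC Φ hΦ hΦc k, ibpC Ψ hΨ hΨc j, ibpC G hG hGc k, ibpC H hH hHc j]
    simp
  -- rewrite via master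
  have hmaster : ∀ x : En n, Complex.I * (pd Φ k x - pd Ψ j x) + (pd G k x - pd H j x)
      = Complex.I * ((Bfield a k j x * ‖u x‖^2 : ℝ) : ℂ) + (g x - (starRingEnd ℂ) (g x)) :=
    fun x => master a ha u hu k j x
  have hzero2 : ∫ x, (Complex.I * ((Bfield a k j x * ‖u x‖^2 : ℝ) : ℂ)
      + (g x - (starRingEnd ℂ) (g x))) = 0 := by
    rw [← integral_congr_ae (Filter.Eventually.of_forall hmaster)]
    exact hzero
  have hsplit : Complex.I * ((X : ℝ) : ℂ) + ((2 * T : ℝ) : ℂ) * Complex.I = 0 := by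
    have e1 : ∫ x, Complex.I * ((Bfield a k j x * ‖u x‖^2 : ℝ) : ℂ)
        = Complex.I * ((X : ℝ) : ℂ) := by
      rw [integral_const_mul, integral_ofRealC]
    have e2 : ∫ x, (g x - (starRingEnd ℂ) (g x)) = ((2 * T : ℝ) : ℂ) * Complex.I := by
      have p : ∀ x : En n, g x - (starRingEnd ℂ) (g x)
          = ((2 * (g x).im : ℝ) : ℂ) * Complex.I := fun x => Complex.sub_conj (g x)
      rw [integral_congr_ae (Filter.Eventually.of_forall p), integral_mul_const,
        integral_ofRealC, integral_const_mul]
    have i3 : Integrable (fun x => g x - (starRingEnd ℂ) (g x)) := intg.sub intcg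
    rw [← e1, ← e2, ← integral_add int1 i3]
    exact hzero2
  have h3 : ((X + 2 * T : ℝ) : ℂ) * Complex.I = 0 := by
    push_cast
    push_cast at hsplit
    linear_combination hsplit
  rcases mul_eq_zero.mp h3 with h4 | h4
  · have : X + 2 * T = 0 := by exact_mod_cast h4
    linarith
  · exact absurd h4 Complex.I_ne_zero


lemma comb {n : ℕ} (f : Fin n → ℝ) :
    (∑ k, ∑ j, if k < j then f k + f j else 0) = ((n : ℝ) - 1) * ∑ j, f j := by
  have h1 : ∀ k j : Fin n, (if k < j then f k + f j else 0)
      = (if k < j then f k else 0) + (if k < j then f j else 0) := by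
    intro k j; split <;> simp
  have h2 : (∑ k, ∑ j : Fin n, if k < j then f j else 0)
      = ∑ k, ∑ j : Fin n, if j < k then f k else 0 := by
    rw [Finset.sum_comm]
  have h3 : ∀ k : Fin n, (∑ j : Fin n, ((if k < j then f k else 0) + (if j < k then f k else 0)))
      = ∑ j : Fin n, (f k - if k = j then f k else 0) := by
    intro k
    apply Finset.sum_congr rfl
    intro j _
    rcases lt_trichotomy k j with h | h | h
    · simp [h, h.ne, not_lt.mpr h.le]
    · simp [h]
    · simp [h, h.ne', not_lt.mpr h.le]
  calc (∑ k, ∑ j, if k < j then f k + f j else 0)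
      = (∑ k, ∑ j : Fin n, if k < j then f k else 0)
        + (∑ k, ∑ j : Fin n, if k < j then f j else 0) := by
        simp only [h1, Finset.sum_add_distrib]
    _ = ∑ k, ∑ j : Fin n, ((if k < j then f k else 0) + (if j < k then f k else 0)) := by
        rw [h2, ← Finset.sum_add_distrib]
        apply Finset.sum_congr rfl
        intro k _
        rw [← Finset.sum_add_distrib]
    _ = ∑ k : Fin n, ((n : ℝ) * f k - f k) := by
        apply Finset.sum_congr rfl
        intro k _
        rw [h3 k, Finset.sum_sub_distrib, Finset.sum_const, Finset.sum_ite_eq]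
        simp [Finset.card_univ, nsmul_eq_mul]
    _ = ((n : ℝ) - 1) * ∑ j, f j := by
        rw [Finset.sum_sub_distrib, ← Finset.mul_sum]
        ring

lemma absA {n : ℕ} (A : Fin n → Fin n → ℝ)
    (hAnorm : (∑ j, ∑ k, if j < k then (A j k) ^ 2 else 0) = 1)
    {p q : Fin n} (hpq : p < q) : |A p q| ≤ 1 := by
  have hsq : (A p q)^2 ≤ 1 := by
    calc (A p q)^2 = (if p < q then (A p q)^2 else 0) := by simp [hpq]
      _ ≤ ∑ k, if p < k then (A p k)^2 else 0 := by
          apply Finset.single_le_sum (f := fun k => if p < k then (A p k)^2 else 0)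
          · intro i _
            split
            · exact sq_nonneg _
            · exact le_rfl
          · exact Finset.mem_univ q
      _ ≤ ∑ j, ∑ k, if j < k then (A j k)^2 else 0 := by
          apply Finset.single_le_sum (f := fun j => ∑ k, if j < k then (A j k)^2 else 0)
          · intro i _
            apply Finset.sum_nonneg
            intro k _
            split
            · exact sq_nonneg _
            · exact le_rfl
          · exact Finset.mem_univ p
      _ = 1 := hAnorm
  nlinarith [abs_nonneg (A p q), sq_abs (A p q)]

end Stmt12Aux

open Stmt12Aux in
/-- Avron–Herbst–Simon type local bound: if `A` is a constant antisymmetric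
matrix with `Σ_{j<k} A_{jk}² = 1` and `Σ_{k<j} A_{kj} B_{kj}(y) ≥ r₀` on the ball `B(γ,r)`,
then `Σ_j ‖P_j u‖² ≥ (r₀/(n−1)) ‖u‖²` for all `u ∈ C_c^∞(B(γ,r))`. -/
theorem stmt12 {n : ℕ} (hn : 1 < n)
    (a : Fin n → En n → ℝ) (ha : ∀ j, ContDiff ℝ 1 (a j))
    (A : Fin n → Fin n → ℝ) (hAanti : ∀ j k, A k j = - A j k)
    (hAnorm : (∑ j, ∑ k, if j < k then (A j k) ^ 2 else 0) = 1)
    (γ : En n) (r r₀ : ℝ) (hr : 0 < r)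
    (hlb : ∀ y ∈ ball γ r,
      r₀ ≤ ∑ k, ∑ j, if k < j then A k j * Bfield a k j y else 0)
    (u : En n → ℂ) (hu : ContDiff ℝ (⊤ : ℕ∞) u) (hc : HasCompactSupport u)
    (hsupp : tsupport u ⊆ ball γ r) :
    r₀ / ((n : ℝ) - 1) * (∫ x, ‖u x‖ ^ 2) ≤ ∑ j, ∫ x, ‖magP a j u x‖ ^ 2 := by
  have hn1 : (0 : ℝ) < (n : ℝ) - 1 := by
    have : (1 : ℝ) < (n : ℝ) := by exact_mod_cast hn
    linarith
  have contBf : ∀ k j : Fin n, Continuous (fun x => Bfield a k j x) := fun k j =>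
    (pdR_continuous (ha j) k).sub (pdR_continuous (ha k) j)
  have suppu2 : HasCompactSupport (fun x => ‖u x‖^2) :=
    hc.comp_left (g := fun z : ℂ => ‖z‖^2) (by simp)
  have contu2 : Continuous (fun x => ‖u x‖^2) := (hu.continuous.norm).pow 2
  have int_u2 : Integrable (fun x => ‖u x‖^2) :=
    contu2.integrable_of_hasCompactSupport suppu2
  have int_mag2 : ∀ j, Integrable (fun x => ‖magP a j u x‖^2) := by
    intro j
    apply Continuous.integrable_of_hasCompactSupport
    · exact ((magP_continuous a ha u hu j).norm).pow 2
    · exact (magP_hasCompactSupport a u hc j).comp_left (g := fun z : ℂ => ‖z‖^2) (by simp)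
  have int_B : ∀ k j : Fin n, Integrable (fun x => Bfield a k j x * ‖u x‖^2) := fun k j =>
    ((contBf k j).mul contu2).integrable_of_hasCompactSupport suppu2.mul_left
  have int_Im : ∀ k j : Fin n,
      Integrable (fun x => ((starRingEnd ℂ) (magP a k u x) * magP a j u x).im) := by
    intro k j
    apply Continuous.integrable_of_hasCompactSupport
    · exact Complex.continuous_im.comp
        ((Complex.conjCLE.continuous.comp (magP_continuous a ha u hu k)).mul
          (magP_continuous a ha u hu j))
    · exact (((magP_hasCompactSupport a u hc k).comp_left
        (g := (starRingEnd ℂ)) (map_zero _)).mul_right).comp_left (g := Complex.im) rfl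
  set Ij : Fin n → ℝ := fun j => ∫ x, ‖magP a j u x‖^2 with hIj
  set X : ℝ := ∫ x, ‖u x‖^2 with hX
  -- step 1
  have int_S : Integrable
      (fun x => (∑ k, ∑ j, if k < j then A k j * Bfield a k j x else 0) * ‖u x‖^2) := by
    apply Continuous.integrable_of_hasCompactSupport
    · apply Continuous.mul _ contu2
      apply continuous_finset_sum
      intro k _
      apply continuous_finset_sum
      intro j _
      by_cases h : k < j
      · simp only [h, if_true]; exact continuous_const.mul (contBf k j)
      · simpa [h] using continuous_const
    · exact suppu2.mul_left
  have step1 : r₀ * X ≤ ∫ x, (∑ k, ∑ j, if k < j then A k j * Bfield a k j x else 0)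
      * ‖u x‖^2 := by
    rw [hX, ← integral_const_mul]
    apply integral_mono (int_u2.const_mul r₀) int_S
    intro x
    by_cases hx : x ∈ ball γ r
    · exact mul_le_mul_of_nonneg_right (hlb x hx) (by positivity)
    · have hux : u x = 0 := image_eq_zero_of_notMem_tsupport (fun hmem => hx (hsupp hmem))
      simp [hux]
  -- step 2
  have step2 : (∫ x, (∑ k, ∑ j, if k < j then A k j * Bfield a k j x else 0) * ‖u x‖^2)
      = ∑ k, ∑ j, if k < j then A k j * ∫ x, Bfield a k j x * ‖u x‖^2 else 0 := by
    have hpt : ∀ x : En n, (∑ k, ∑ j, if k < j then A k j * Bfield a k j x else 0) * ‖u x‖^2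
        = ∑ k, ∑ j, (if k < j then A k j * (Bfield a k j x * ‖u x‖^2) else 0) := by
      intro x
      rw [Finset.sum_mul]
      apply Finset.sum_congr rfl
      intro k _
      rw [Finset.sum_mul]
      apply Finset.sum_congr rfl
      intro j _
      split <;> ring
    have intterm : ∀ k j : Fin n,
        Integrable (fun x => if k < j then A k j * (Bfield a k j x * ‖u x‖^2) else 0) := by
      intro k j
      by_cases h : k < j
      · simpa [h] using (int_B k j).const_mul (A k j)
      · simpa [h] using integrable_zero (En n) ℝ volume
    rw [integral_congr_ae (Filter.Eventually.of_forall hpt)]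
    rw [integral_finset_sum _ (fun k _ => integrable_finset_sum _ (fun j _ => intterm k j))]
    apply Finset.sum_congr rfl
    intro k _
    rw [integral_finset_sum _ (fun j _ => intterm k j)]
    apply Finset.sum_congr rfl
    intro j _
    by_cases h : k < j
    · simp only [h, if_true]
      rw [integral_const_mul]
    · simp [h]
  -- step 3
  have step3 : (∑ k, ∑ j, if k < j then A k j * ∫ x, Bfield a k j x * ‖u x‖^2 else 0)
      ≤ ∑ k, ∑ j, if k < j then Ij k + Ij j else 0 := by
    apply Finset.sum_le_sum
    intro k _
    apply Finset.sum_le_sum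
    intro j _
    by_cases h : k < j
    · simp only [h, if_true]
      rw [key_id a ha u hu hc k j, ← mul_assoc, ← integral_const_mul]
      have hintr : Integrable (fun x =>
          (A k j * -2) * ((starRingEnd ℂ) (magP a k u x) * magP a j u x).im) :=
        (int_Im k j).const_mul _
      have hintsum : Integrable (fun x => ‖magP a k u x‖^2 + ‖magP a j u x‖^2) :=
        (int_mag2 k).add (int_mag2 j)
      calc ∫ x, (A k j * -2) * ((starRingEnd ℂ) (magP a k u x) * magP a j u x).im
          ≤ ∫ x, (‖magP a k u x‖^2 + ‖magP a j u x‖^2) := by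
            apply integral_mono hintr hintsum
            intro x
            set z := magP a k u x
            set w := magP a j u x
            have h1 : |((starRingEnd ℂ) z * w).im| ≤ ‖z‖ * ‖w‖ := by
              refine le_trans (Complex.abs_im_le_norm _) ?_
              rw [norm_mul]
              simp
            have h3 : |A k j| ≤ 1 := absA A hAnorm h
            calc (A k j * -2) * ((starRingEnd ℂ) z * w).im
                ≤ |(A k j * -2) * ((starRingEnd ℂ) z * w).im| := le_abs_self _
              _ = 2 * |A k j| * |((starRingEnd ℂ) z * w).im| := by
                  have h2 : |(-2 : ℝ)| = 2 := by norm_num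
                  rw [abs_mul, abs_mul, h2]
                  ring
              _ ≤ 2 * 1 * (‖z‖ * ‖w‖) := by
                  apply mul_le_mul _ h1 (abs_nonneg _) (by norm_num)
                  apply mul_le_mul_of_nonneg_left h3 (by norm_num)
              _ = 2 * ‖z‖ * ‖w‖ := by ring
              _ ≤ ‖z‖^2 + ‖w‖^2 := two_mul_le_add_sq _ _
        _ = Ij k + Ij j := integral_add (int_mag2 k) (int_mag2 j)
    · simp [h]
  -- combine
  have step4 : (∑ k, ∑ j, if k < j then Ij k + Ij j else 0) = ((n : ℝ) - 1) * ∑ j, Ij j :=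
    comb Ij
  have final : r₀ * X ≤ ((n : ℝ) - 1) * ∑ j, Ij j := by
    calc r₀ * X ≤ _ := step1
      _ = _ := step2
      _ ≤ _ := step3
      _ = _ := step4
  rw [div_mul_eq_mul_div, div_le_iff₀ hn1]
  calc r₀ * X ≤ ((n : ℝ) - 1) * ∑ j, Ij j := final
    _ = (∑ j, Ij j) * ((n : ℝ) - 1) := by ring
end
end

section
/- Let a be a magnetic potential on ℝ² with B(x) ≥ −C for some constant C and suppose there is δ ∈ [−1,1] with V(x) + δB(x) → +∞ as |x| → ∞, where V ∈ L^∞_loc(ℝ²). Then the magnetic Schrödinger form h_{a,V} satisfies: for every M > 0 there exists R > 0 such that h_{a,V}(u,u) ≥ M (u,u) for all u ∈ C_c^∞(ℝ² \ B(0,R)). -/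
open MeasureTheory Metric Filter

noncomputable section

namespace S16

variable {n : ℕ}

lemma pd_add {f g : En n → ℂ} {j : Fin n} {x : En n}
    (hf : DifferentiableAt ℝ f x) (hg : DifferentiableAt ℝ g x) :
    pd (fun y => f y + g y) j x = pd f j x + pd g j x := by
  unfold pd; rw [fderiv_fun_add hf hg]; rfl

lemma pd_mul {f g : En n → ℂ} {j : Fin n} {x : En n}
    (hf : DifferentiableAt ℝ f x) (hg : DifferentiableAt ℝ g x) :
    pd (fun y => f y * g y) j x = f x * pd g j x + g x * pd f j x := by
  unfold pd; rw [fderiv_fun_mul hf hg]; simp [smul_eq_mul]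

lemma pd_const_mul {f : En n → ℂ} {j : Fin n} {x : En n} (c : ℂ)
    (hf : DifferentiableAt ℝ f x) :
    pd (fun y => c * f y) j x = c * pd f j x := by
  unfold pd; rw [fderiv_const_mul hf]; simp

lemma pd_conj {u : En n → ℂ} {j : Fin n} {x : En n} (hu : DifferentiableAt ℝ u x) :
    pd (fun y => (starRingEnd ℂ) (u y)) j x = (starRingEnd ℂ) (pd u j x) := by
  unfold pd
  have h : HasFDerivAt (fun y => (starRingEnd ℂ) (u y))
      ((Complex.conjCLE.toContinuousLinearMap).comp (fderiv ℝ u x)) x :=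
    (Complex.conjCLE.toContinuousLinearMap.hasFDerivAt).comp x hu.hasFDerivAt
  rw [h.fderiv]
  rfl

lemma pd_ofReal {b : En n → ℝ} {j : Fin n} {x : En n} (hb : DifferentiableAt ℝ b x) :
    pd (fun y => ((b y : ℝ) : ℂ)) j x = ((pdR b j x : ℝ) : ℂ) := by
  unfold pd pdR
  have h : HasFDerivAt (fun y => ((b y : ℝ) : ℂ))
      (Complex.ofRealCLM.comp (fderiv ℝ b x)) x :=
    (Complex.ofRealCLM.hasFDerivAt).comp x hb.hasFDerivAt
  rw [h.fderiv]
  rfl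

lemma contDiff_pd {u : En n → ℂ} (hu : ContDiff ℝ (⊤ : ℕ∞) u) (j : Fin n) :
    ContDiff ℝ (⊤ : ℕ∞) (pd u j) :=
  (hu.fderiv_right (by simp)).clm_apply contDiff_const

lemma pd_swap {u : En n → ℂ} (hu : ContDiff ℝ (⊤ : ℕ∞) u) (j k : Fin n) (x : En n) :
    pd (pd u j) k x = pd (pd u k) j x := by
  have hd : DifferentiableAt ℝ (fderiv ℝ u) x :=
    ((hu.fderiv_right (m := (⊤ : ℕ∞)) (by simp)).differentiable (by simp)).differentiableAt
  have h1 : ∀ (v w : En n), fderiv ℝ (fun y => fderiv ℝ u y v) x w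
      = fderiv ℝ (fderiv ℝ u) x w v := by
    intro v w
    have : HasFDerivAt (fun y => fderiv ℝ u y v)
        ((ContinuousLinearMap.apply ℝ ℂ v).comp (fderiv ℝ (fderiv ℝ u) x)) x :=
      ((ContinuousLinearMap.apply ℝ ℂ v).hasFDerivAt).comp x hd.hasFDerivAt
    rw [this.fderiv]; rfl
  have hsym : IsSymmSndFDerivAt ℝ u x :=
    hu.contDiffAt.isSymmSndFDerivAt (by rw [minSmoothness_of_isRCLikeNormedField]; exact WithTop.coe_le_coe.mpr (le_top : (2 : ℕ∞) ≤ ⊤))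
  show pd (fun y => fderiv ℝ u y (EuclideanSpace.single j 1)) k x
      = pd (fun y => fderiv ℝ u y (EuclideanSpace.single k 1)) j x
  unfold pd
  rw [h1, h1, hsym.eq]

lemma integral_pdR_eq_zero {g : En n → ℝ} (hg : ContDiff ℝ 1 g)
    (hc : HasCompactSupport g) (j : Fin n) :
    ∫ x, pdR g j x = 0 := by
  obtain ⟨D, hD⟩ := ContDiff.lipschitzWith_of_hasCompactSupport hc hg one_ne_zero
  have key := LipschitzWith.integral_lineDeriv_mul_eq (μ := volume)
    (LipschitzWith.const (1:ℝ)) hD hc (EuclideanSpace.single j 1)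
  have h0 : ∀ x : En n, lineDeriv ℝ (fun _ : En n => (1:ℝ)) x (EuclideanSpace.single j 1) = 0 := by
    intro x
    rw [(differentiableAt_const (1:ℝ)).lineDeriv_eq_fderiv]
    simp
  have h1 : ∀ x : En n, lineDeriv ℝ g x (-(EuclideanSpace.single j 1)) = -pdR g j x := by
    intro x
    rw [((hg.differentiable one_ne_zero).differentiableAt).lineDeriv_eq_fderiv]
    simp [pdR]
  simp only [h0, zero_mul, integral_zero, h1, mul_one] at key
  have := key.symm
  rw [integral_neg] at this
  linarith [this]

lemma pd_continuous {f : En n → ℂ} (hf : ContDiff ℝ 1 f) (j : Fin n) :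
    Continuous (pd f j) := by
  have : Continuous (fderiv ℝ f) := hf.continuous_fderiv one_ne_zero
  exact ((ContinuousLinearMap.apply ℝ ℂ (EuclideanSpace.single j 1)).continuous).comp this

lemma pdR_continuous {f : En n → ℝ} (hf : ContDiff ℝ 1 f) (j : Fin n) :
    Continuous (pdR f j) := by
  have : Continuous (fderiv ℝ f) := hf.continuous_fderiv one_ne_zero
  exact ((ContinuousLinearMap.apply ℝ ℝ (EuclideanSpace.single j 1)).continuous).comp this

lemma hasCompactSupport_pd {f : En n → ℂ} (hc : HasCompactSupport f) (j : Fin n) :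
    HasCompactSupport (pd f j) :=
  hc.fderiv_apply ℝ (EuclideanSpace.single j 1)

lemma integral_pd_eq_zero {g : En n → ℂ} (hg : ContDiff ℝ 1 g)
    (hc : HasCompactSupport g) (j : Fin n) :
    ∫ x, pd g j x = 0 := by
  have hre : ContDiff ℝ 1 (fun x => (g x).re) := Complex.reCLM.contDiff.comp hg
  have him : ContDiff ℝ 1 (fun x => (g x).im) := Complex.imCLM.contDiff.comp hg
  have hcre : HasCompactSupport (fun x => (g x).re) :=
    hc.comp_left (g := Complex.re) rfl
  have hcim : HasCompactSupport (fun x => (g x).im) :=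
    hc.comp_left (g := Complex.im) rfl
  have hdg : ∀ x, DifferentiableAt ℝ g x := fun x =>
    ((hg.differentiable one_ne_zero) x)
  have hptre : ∀ x, pdR (fun y => (g y).re) j x = (pd g j x).re := by
    intro x
    unfold pdR pd
    have h : HasFDerivAt (fun y => (g y).re) (Complex.reCLM.comp (fderiv ℝ g x)) x :=
      (Complex.reCLM.hasFDerivAt).comp x (hdg x).hasFDerivAt
    rw [h.fderiv]; rfl
  have hptim : ∀ x, pdR (fun y => (g y).im) j x = (pd g j x).im := by
    intro x
    unfold pdR pd
    have h : HasFDerivAt (fun y => (g y).im) (Complex.imCLM.comp (fderiv ℝ g x)) x :=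
      (Complex.imCLM.hasFDerivAt).comp x (hdg x).hasFDerivAt
    rw [h.fderiv]; rfl
  have hint : Integrable (pd g j) :=
    (pd_continuous hg j).integrable_of_hasCompactSupport (hasCompactSupport_pd hc j)
  have h1 : (∫ x, pd g j x).re = ∫ x, (pd g j x).re := by
    simpa using (integral_re hint).symm
  have h2 : (∫ x, pd g j x).im = ∫ x, (pd g j x).im := by
    simpa using (integral_im hint).symm
  have hre0 : (∫ x, (pd g j x).re) = 0 := by
    rw [← integral_congr_ae (Eventually.of_forall hptre)]
    exact integral_pdR_eq_zero hre hcre j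
  have him0 : (∫ x, (pd g j x).im) = 0 := by
    rw [← integral_congr_ae (Eventually.of_forall hptim)]
    exact integral_pdR_eq_zero him hcim j
  refine Complex.ext ?_ ?_
  · rw [h1, hre0]; rfl
  · rw [h2, him0]; rfl

lemma pointwise_comm (a : Fin 2 → En 2 → ℝ) (ha : ∀ j, ContDiff ℝ 1 (a j))
    (u : En 2 → ℂ) (hu : ContDiff ℝ (⊤ : ℕ∞) u) (x : En 2) :
    (starRingEnd ℂ) (magP a 0 u x) * magP a 1 u x
      - (starRingEnd ℂ) (magP a 1 u x) * magP a 0 u x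
    = pd (fun y => (starRingEnd ℂ) (u y) * pd u 1 y
          + Complex.I * (((a 1 y : ℝ) : ℂ) * ((starRingEnd ℂ) (u y) * u y))) 0 x
      - pd (fun y => (starRingEnd ℂ) (u y) * pd u 0 y
          + Complex.I * (((a 0 y : ℝ) : ℂ) * ((starRingEnd ℂ) (u y) * u y))) 1 x
      - Complex.I * ((Bfield a 0 1 x : ℝ) : ℂ) * ((starRingEnd ℂ) (u x) * u x) := by
  have hud : ∀ y, DifferentiableAt ℝ u y := fun y => (hu.differentiable (by simp)) y
  have hu0d : ∀ y, DifferentiableAt ℝ (pd u 0) y := fun y =>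
    ((contDiff_pd hu 0).differentiable (by simp)) y
  have hu1d : ∀ y, DifferentiableAt ℝ (pd u 1) y := fun y =>
    ((contDiff_pd hu 1).differentiable (by simp)) y
  have hubd : ∀ y, DifferentiableAt ℝ (fun z => (starRingEnd ℂ) (u z)) y := fun y =>
    (Complex.conjCLE.toContinuousLinearMap.contDiff.comp hu).differentiable (by simp) y
  have had : ∀ (j : Fin 2) (y : En 2), DifferentiableAt ℝ (fun z => ((a j z : ℝ) : ℂ)) y :=
    fun j y => ((Complex.ofRealCLM.contDiff.comp (ha j)).differentiable one_ne_zero) y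
  have haRd : ∀ (j : Fin 2) (y : En 2), DifferentiableAt ℝ (a j) y :=
    fun j y => ((ha j).differentiable one_ne_zero) y
  have hswap := pd_swap hu 1 0 x
  -- compute pd F1 0 x
  have hF1 : pd (fun y => (starRingEnd ℂ) (u y) * pd u 1 y
          + Complex.I * (((a 1 y : ℝ) : ℂ) * ((starRingEnd ℂ) (u y) * u y))) 0 x
      = ((starRingEnd ℂ) (u x) * pd (pd u 1) 0 x + pd u 1 x * (starRingEnd ℂ) (pd u 0 x))
        + Complex.I * (((a 1 x : ℝ) : ℂ) * ((starRingEnd ℂ) (u x) * pd u 0 x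
            + u x * (starRingEnd ℂ) (pd u 0 x))
          + ((starRingEnd ℂ) (u x) * u x) * ((pdR (a 1) 0 x : ℝ) : ℂ)) := by
    rw [pd_add ((hubd x).fun_mul (hu1d x))
        ((differentiableAt_const _).fun_mul ((had 1 x).fun_mul ((hubd x).fun_mul (hud x))))]
    rw [pd_mul (hubd x) (hu1d x)]
    rw [pd_const_mul _ ((had 1 x).fun_mul ((hubd x).fun_mul (hud x)))]
    rw [pd_mul (had 1 x) ((hubd x).fun_mul (hud x))]
    rw [pd_mul (hubd x) (hud x)]
    rw [pd_conj (hud x), pd_ofReal (haRd 1 x)]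
  have hF2 : pd (fun y => (starRingEnd ℂ) (u y) * pd u 0 y
          + Complex.I * (((a 0 y : ℝ) : ℂ) * ((starRingEnd ℂ) (u y) * u y))) 1 x
      = ((starRingEnd ℂ) (u x) * pd (pd u 0) 1 x + pd u 0 x * (starRingEnd ℂ) (pd u 1 x))
        + Complex.I * (((a 0 x : ℝ) : ℂ) * ((starRingEnd ℂ) (u x) * pd u 1 x
            + u x * (starRingEnd ℂ) (pd u 1 x))
          + ((starRingEnd ℂ) (u x) * u x) * ((pdR (a 0) 1 x : ℝ) : ℂ)) := by
    rw [pd_add ((hubd x).fun_mul (hu0d x))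
        ((differentiableAt_const _).fun_mul ((had 0 x).fun_mul ((hubd x).fun_mul (hud x))))]
    rw [pd_mul (hubd x) (hu0d x)]
    rw [pd_const_mul _ ((had 0 x).fun_mul ((hubd x).fun_mul (hud x)))]
    rw [pd_mul (had 0 x) ((hubd x).fun_mul (hud x))]
    rw [pd_mul (hubd x) (hud x)]
    rw [pd_conj (hud x), pd_ofReal (haRd 0 x)]
  rw [hF1, hF2, hswap]
  simp only [magP, Bfield, map_add, map_mul, map_neg, Complex.conj_I, Complex.conj_ofReal]
  push_cast
  ring_nf
  simp only [Complex.I_sq]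
  ring

lemma conj_mul_self (z : ℂ) : (starRingEnd ℂ) z * z = ((‖z‖^2 : ℝ) : ℂ) := by
  rw [mul_comm, Complex.mul_conj]
  norm_cast
  rw [Complex.normSq_eq_norm_sq]

lemma norm_add_I_mul (z w : ℂ) :
    ‖z + Complex.I * w‖^2 = ‖z‖^2 + ‖w‖^2 - 2 * ((starRingEnd ℂ) z * w).im := by
  have h : ∀ y : ℂ, ‖y‖^2 = y.re^2 + y.im^2 := fun y => by
    rw [Complex.sq_norm, Complex.normSq_apply]; ring
  simp only [h, Complex.add_re, Complex.add_im, Complex.mul_re, Complex.mul_im,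
    Complex.I_re, Complex.I_im, Complex.conj_re, Complex.conj_im]
  ring

lemma norm_sub_I_mul (z w : ℂ) :
    ‖z - Complex.I * w‖^2 = ‖z‖^2 + ‖w‖^2 + 2 * ((starRingEnd ℂ) z * w).im := by
  have h : ∀ y : ℂ, ‖y‖^2 = y.re^2 + y.im^2 := fun y => by
    rw [Complex.sq_norm, Complex.normSq_apply]; ring
  simp only [h, Complex.sub_re, Complex.sub_im, Complex.mul_re, Complex.mul_im,
    Complex.I_re, Complex.I_im, Complex.conj_re, Complex.conj_im]
  ring

section Key

variable (a : Fin 2 → En 2 → ℝ) (u : En 2 → ℂ)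

lemma magP_continuous (ha : ∀ j, ContDiff ℝ 1 (a j)) (hu : ContDiff ℝ (⊤ : ℕ∞) u) (j : Fin 2) :
    Continuous (magP a j u) := by
  have h1 : Continuous (pd u j) := pd_continuous (hu.of_le (by simp)) j
  exact (continuous_const.mul h1).add
    ((Complex.continuous_ofReal.comp (ha j).continuous).mul hu.continuous)

lemma magP_compactSupport (hcu : HasCompactSupport u) (j : Fin 2) :
    HasCompactSupport (magP a j u) := by
  have h1 : HasCompactSupport (fun x => -Complex.I * pd u j x) :=
    (hasCompactSupport_pd hcu j).mul_left
  have h2 : HasCompactSupport (fun x => ((a j x : ℝ) : ℂ) * u x) := hcu.mul_left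
  exact h1.add h2

lemma comm_integral (ha : ∀ j, ContDiff ℝ 1 (a j))
    (hu : ContDiff ℝ (⊤ : ℕ∞) u) (hcu : HasCompactSupport u) :
    2 * (∫ x, (starRingEnd ℂ) (magP a 0 u x) * magP a 1 u x).im
      = -(∫ x, Bfield a 0 1 x * ‖u x‖^2) := by
  have hu' : ContDiff ℝ 1 u := hu.of_le (by simp)
  have hub : ContDiff ℝ (⊤ : ℕ∞) (fun y => (starRingEnd ℂ) (u y)) :=
    Complex.conjCLE.toContinuousLinearMap.contDiff.comp hu
  have hu0 : ContDiff ℝ 1 (pd u 0) := (contDiff_pd hu 0).of_le (by simp)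
  have hu1 : ContDiff ℝ 1 (pd u 1) := (contDiff_pd hu 1).of_le (by simp)
  have haC : ∀ j : Fin 2, ContDiff ℝ 1 (fun y => ((a j y : ℝ) : ℂ)) := fun j =>
    Complex.ofRealCLM.contDiff.comp (ha j)
  -- F1 and F2
  have hF1s : ContDiff ℝ 1 (fun y => (starRingEnd ℂ) (u y) * pd u 1 y
      + Complex.I * (((a 1 y : ℝ) : ℂ) * ((starRingEnd ℂ) (u y) * u y))) :=
    ((hub.of_le (by simp)).mul hu1).add
      (contDiff_const.mul ((haC 1).mul ((hub.of_le (by simp)).mul hu')))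
  have hF2s : ContDiff ℝ 1 (fun y => (starRingEnd ℂ) (u y) * pd u 0 y
      + Complex.I * (((a 0 y : ℝ) : ℂ) * ((starRingEnd ℂ) (u y) * u y))) :=
    ((hub.of_le (by simp)).mul hu0).add
      (contDiff_const.mul ((haC 0).mul ((hub.of_le (by simp)).mul hu')))
  have hF1c : HasCompactSupport (fun y => (starRingEnd ℂ) (u y) * pd u 1 y
      + Complex.I * (((a 1 y : ℝ) : ℂ) * ((starRingEnd ℂ) (u y) * u y))) :=
    ((hasCompactSupport_pd hcu 1).mul_left).add (((hcu.mul_left).mul_left).mul_left)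
  have hF2c : HasCompactSupport (fun y => (starRingEnd ℂ) (u y) * pd u 0 y
      + Complex.I * (((a 0 y : ℝ) : ℂ) * ((starRingEnd ℂ) (u y) * u y))) :=
    ((hasCompactSupport_pd hcu 0).mul_left).add (((hcu.mul_left).mul_left).mul_left)
  have hiF1 : Integrable (pd (fun y => (starRingEnd ℂ) (u y) * pd u 1 y
      + Complex.I * (((a 1 y : ℝ) : ℂ) * ((starRingEnd ℂ) (u y) * u y))) 0) :=
    (pd_continuous hF1s 0).integrable_of_hasCompactSupport (hasCompactSupport_pd hF1c 0)
  have hiF2 : Integrable (pd (fun y => (starRingEnd ℂ) (u y) * pd u 0 y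
      + Complex.I * (((a 0 y : ℝ) : ℂ) * ((starRingEnd ℂ) (u y) * u y))) 1) :=
    (pd_continuous hF2s 1).integrable_of_hasCompactSupport (hasCompactSupport_pd hF2c 1)
  have hiB : Integrable (fun x => Complex.I * ((Bfield a 0 1 x : ℝ) : ℂ)
      * ((starRingEnd ℂ) (u x) * u x)) := by
    apply Continuous.integrable_of_hasCompactSupport
    · apply (continuous_const.mul (Complex.continuous_ofReal.comp ?_)).mul
        ((Complex.continuous_conj.comp hu.continuous).mul hu.continuous)
      exact (pdR_continuous (ha 1) 0).sub (pdR_continuous (ha 0) 1)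
    · exact (hcu.mul_left).mul_left
  have hG : Integrable (fun x => (starRingEnd ℂ) (magP a 0 u x) * magP a 1 u x) :=
    ((Complex.continuous_conj.comp (S16.magP_continuous a u ha hu 0)).mul
      (S16.magP_continuous a u ha hu 1)).integrable_of_hasCompactSupport
      ((S16.magP_compactSupport a u hcu 1).mul_left)
  have hG' : Integrable (fun x => (starRingEnd ℂ) (magP a 1 u x) * magP a 0 u x) :=
    ((Complex.continuous_conj.comp (S16.magP_continuous a u ha hu 1)).mul
      (S16.magP_continuous a u ha hu 0)).integrable_of_hasCompactSupport
      ((S16.magP_compactSupport a u hcu 0).mul_left)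
  -- main integral identity
  have hmain : (∫ x, (starRingEnd ℂ) (magP a 0 u x) * magP a 1 u x)
      - (∫ x, (starRingEnd ℂ) (magP a 1 u x) * magP a 0 u x)
      = -(Complex.I * ((∫ x, Bfield a 0 1 x * ‖u x‖^2 : ℝ) : ℂ)) := by
    have hiF12 : Integrable (fun x => pd (fun y => (starRingEnd ℂ) (u y) * pd u 1 y
        + Complex.I * (((a 1 y : ℝ) : ℂ) * ((starRingEnd ℂ) (u y) * u y))) 0 x
        - pd (fun y => (starRingEnd ℂ) (u y) * pd u 0 y
        + Complex.I * (((a 0 y : ℝ) : ℂ) * ((starRingEnd ℂ) (u y) * u y))) 1 x) :=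
      hiF1.sub hiF2
    rw [← integral_sub hG hG']
    rw [integral_congr_ae (Eventually.of_forall (pointwise_comm a ha u hu))]
    rw [integral_sub hiF12 hiB, integral_sub hiF1 hiF2]
    rw [integral_pd_eq_zero hF1s hF1c 0, integral_pd_eq_zero hF2s hF2c 1]
    have : (∫ x, Complex.I * ((Bfield a 0 1 x : ℝ) : ℂ) * ((starRingEnd ℂ) (u x) * u x))
        = Complex.I * ((∫ x, Bfield a 0 1 x * ‖u x‖^2 : ℝ) : ℂ) := by
      have hpt : ∀ x, Complex.I * ((Bfield a 0 1 x : ℝ) : ℂ) * ((starRingEnd ℂ) (u x) * u x)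
          = Complex.I * (((Bfield a 0 1 x * ‖u x‖^2 : ℝ) : ℂ)) := by
        intro x
        rw [mul_assoc, conj_mul_self]
        push_cast
        ring
      rw [integral_congr_ae (Eventually.of_forall hpt), integral_const_mul]
      congr 1
      exact integral_ofReal
    rw [this]
    ring
  -- second integral is the conjugate of the first
  have hconj : (∫ x, (starRingEnd ℂ) (magP a 1 u x) * magP a 0 u x)
      = (starRingEnd ℂ) (∫ x, (starRingEnd ℂ) (magP a 0 u x) * magP a 1 u x) := by
    rw [← integral_conj]
    apply integral_congr_ae (Eventually.of_forall fun x => ?_)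
    simp only [map_mul, Complex.conj_conj]
    ring
  rw [hconj] at hmain
  have h2 := congrArg Complex.im hmain
  simp only [Complex.sub_im, Complex.conj_im, Complex.neg_im, Complex.mul_im,
    Complex.I_re, Complex.I_im, Complex.ofReal_re, Complex.ofReal_im] at h2
  linarith

set_option maxHeartbeats 1000000 in
lemma key_ineq (ha : ∀ j, ContDiff ℝ 1 (a j))
    (hu : ContDiff ℝ (⊤ : ℕ∞) u) (hcu : HasCompactSupport u) :
    |∫ x, Bfield a 0 1 x * ‖u x‖^2| ≤ ∫ x, ∑ j, ‖magP a j u x‖^2 := by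
  set D0 := magP a 0 u
  set D1 := magP a 1 u
  have hc0 : Continuous D0 := magP_continuous a u ha hu 0
  have hc1 : Continuous D1 := magP_continuous a u ha hu 1
  have hs0 : HasCompactSupport D0 := magP_compactSupport a u hcu 0
  have hs1 : HasCompactSupport D1 := magP_compactSupport a u hcu 1
  have hi0 : Integrable (fun x => ‖D0 x‖^2) :=
    ((hc0.norm).pow 2).integrable_of_hasCompactSupport
      (hs0.comp_left (g := fun z => ‖z‖^2) (by simp) : HasCompactSupport (fun x => ‖D0 x‖^2))
  have hi1 : Integrable (fun x => ‖D1 x‖^2) :=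
    ((hc1.norm).pow 2).integrable_of_hasCompactSupport
      (hs1.comp_left (g := fun z => ‖z‖^2) (by simp) : HasCompactSupport (fun x => ‖D1 x‖^2))
  have hG : Integrable (fun x => (starRingEnd ℂ) (D0 x) * D1 x) :=
    ((Complex.continuous_conj.comp hc0).mul hc1).integrable_of_hasCompactSupport hs1.mul_left
  have hGim : Integrable (fun x => ((starRingEnd ℂ) (D0 x) * D1 x).im) := by
    simpa using hG.im
  have hIm : ∫ x, ((starRingEnd ℂ) (D0 x) * D1 x).im
      = (∫ x, (starRingEnd ℂ) (D0 x) * D1 x).im := by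
    simpa using integral_im hG
  have hcomm := comm_integral a u ha hu hcu
  have hi01 : Integrable (fun x => ‖D0 x‖^2 + ‖D1 x‖^2) := hi0.add hi1
  set J := ∫ x, Bfield a 0 1 x * ‖u x‖^2 with hJ
  set S := ∫ x, ∑ j, ‖magP a j u x‖^2 with hS
  have hSsplit : S = (∫ x, ‖D0 x‖^2) + (∫ x, ‖D1 x‖^2) := by
    rw [hS, ← integral_add hi0 hi1]
    apply integral_congr_ae (Eventually.of_forall fun x => ?_)
    simp [Fin.sum_univ_two, D0, D1]
  have hplus : (0:ℝ) ≤ S + J := by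
    have h0 : (0:ℝ) ≤ ∫ x, ‖D0 x + Complex.I * D1 x‖^2 :=
      integral_nonneg fun x => by positivity
    have hexp : (∫ x, ‖D0 x + Complex.I * D1 x‖^2)
        = (∫ x, ‖D0 x‖^2) + (∫ x, ‖D1 x‖^2)
          - 2 * (∫ x, (starRingEnd ℂ) (D0 x) * D1 x).im := by
      rw [← hIm]
      rw [integral_congr_ae (Eventually.of_forall fun x => norm_add_I_mul (D0 x) (D1 x))]
      rw [integral_sub hi01 (hGim.const_mul 2), integral_add hi0 hi1,
        integral_const_mul]
    rw [hexp] at h0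
    have : 2 * (∫ x, (starRingEnd ℂ) (D0 x) * D1 x).im = -J := hcomm
    rw [hSsplit]
    linarith
  have hminus : (0:ℝ) ≤ S - J := by
    have h0 : (0:ℝ) ≤ ∫ x, ‖D0 x - Complex.I * D1 x‖^2 :=
      integral_nonneg fun x => by positivity
    have hexp : (∫ x, ‖D0 x - Complex.I * D1 x‖^2)
        = (∫ x, ‖D0 x‖^2) + (∫ x, ‖D1 x‖^2)
          + 2 * (∫ x, (starRingEnd ℂ) (D0 x) * D1 x).im := by
      rw [← hIm]
      rw [integral_congr_ae (Eventually.of_forall fun x => norm_sub_I_mul (D0 x) (D1 x))]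
      rw [integral_add hi01 (hGim.const_mul 2), integral_add hi0 hi1,
        integral_const_mul]
    rw [hexp] at h0
    have : 2 * (∫ x, (starRingEnd ℂ) (D0 x) * D1 x).im = -J := hcomm
    rw [hSsplit]
    linarith
  rw [abs_le]
  constructor <;> linarith

end Key

end S16

set_option maxHeartbeats 1000000 in
/-- in two dimensions, if `B ≥ −C` and `V + δB → +∞` at infinity for some
`δ ∈ [−1,1]`, then for every `M > 0` there is `R > 0` such that
`h_{a,V}(u,u) ≥ M‖u‖²` for all `u ∈ C_c^∞(ℝ² \ B(0,R))`. -/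
theorem stmt16 (a : Fin 2 → En 2 → ℝ) (ha : ∀ j, ContDiff ℝ 1 (a j))
    (V : En 2 → ℝ) (hVmeas : Measurable V)
    (hVloc : ∀ K : Set (En 2), IsCompact K → ∃ C, ∀ x ∈ K, |V x| ≤ C)
    (C : ℝ) (hB : ∀ x, -C ≤ Bfield a 0 1 x)
    (δ : ℝ) (hδ : δ ∈ Set.Icc (-1 : ℝ) 1)
    (hinf : Tendsto (fun x => V x + δ * Bfield a 0 1 x) (cocompact (En 2)) atTop) :
    ∀ M > (0:ℝ), ∃ R > (0:ℝ), ∀ u : En 2 → ℂ, ContDiff ℝ (⊤ : ℕ∞) u → HasCompactSupport u →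
      tsupport u ⊆ (ball (0 : En 2) R)ᶜ →
      M * (∫ x, ‖u x‖ ^ 2) ≤ ∫ x, ((∑ j, ‖magP a j u x‖ ^ 2) + V x * ‖u x‖ ^ 2) := by
  intro M hM
  have hev : ∀ᶠ x in cocompact (En 2), M ≤ V x + δ * Bfield a 0 1 x :=
    hinf.eventually_ge_atTop M
  obtain ⟨K, hKc, hKsub⟩ := mem_cocompact.mp hev
  obtain ⟨r, hrK⟩ := hKc.isBounded.subset_closedBall (0 : En 2)
  refine ⟨max r 0 + 1, by positivity, ?_⟩
  intro u hu hcu hsupp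
  have hucont := hu.continuous
  -- pointwise lower bound
  have hpt : ∀ x, M * ‖u x‖^2 ≤ (V x + δ * Bfield a 0 1 x) * ‖u x‖^2 := by
    intro x
    by_cases hx : u x = 0
    · simp [hx]
    · have hxmem : x ∈ tsupport u := subset_closure (by exact hx)
      have hxb : x ∈ (ball (0 : En 2) (max r 0 + 1))ᶜ := hsupp hxmem
      have hxK : x ∉ K := by
        intro hxK
        apply hxb
        have h1 : dist x 0 ≤ r := mem_closedBall.mp (hrK hxK)
        exact mem_ball.mpr (lt_of_le_of_lt (h1.trans (le_max_left r 0)) (by linarith))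
      have hM' : M ≤ V x + δ * Bfield a 0 1 x := hKsub hxK
      exact mul_le_mul_of_nonneg_right hM' (by positivity)
  -- integrability facts
  obtain ⟨C0, hC0⟩ := hVloc (tsupport u) hcu
  have hu2i : Integrable (fun x => ‖u x‖^2) :=
    ((hucont.norm).pow 2).integrable_of_hasCompactSupport
      (hcu.comp_left (g := fun z => ‖z‖^2) (by simp) : HasCompactSupport (fun x => ‖u x‖^2))
  have hVui : Integrable (fun x => V x * ‖u x‖^2) := by
    have hmeas : AEStronglyMeasurable (fun x => V x * ‖u x‖^2) volume :=
      ((hVmeas.aemeasurable).mul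
        (((hucont.norm).pow 2).measurable.aemeasurable)).aestronglyMeasurable
    apply Integrable.mono'
      ((hu2i.const_mul (|C0|)).indicator (isClosed_tsupport u).measurableSet) hmeas
    filter_upwards with x
    by_cases hx : x ∈ tsupport u
    · rw [Set.indicator_of_mem hx]
      have h1 : |V x| ≤ C0 := hC0 x hx
      have h2 : (0:ℝ) ≤ ‖u x‖^2 := by positivity
      calc ‖V x * ‖u x‖^2‖ = |V x| * ‖u x‖^2 := by
            rw [Real.norm_eq_abs, abs_mul, abs_of_nonneg h2]
        _ ≤ |C0| * ‖u x‖^2 := mul_le_mul_of_nonneg_right (h1.trans (le_abs_self C0)) h2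
    · rw [Set.indicator_of_notMem hx]
      have : u x = 0 := image_eq_zero_of_notMem_tsupport hx
      simp [this]
  have hBui : Integrable (fun x => Bfield a 0 1 x * ‖u x‖^2) := by
    apply Continuous.integrable_of_hasCompactSupport
    · exact ((S16.pdR_continuous (ha 1) 0).sub (S16.pdR_continuous (ha 0) 1)).mul
        ((hucont.norm).pow 2)
    · exact (hcu.comp_left (g := fun z => ‖z‖^2) (by simp) : HasCompactSupport (fun x => ‖u x‖^2)).mul_left
  have hmagi : ∀ j : Fin 2, Integrable (fun x => ‖magP a j u x‖^2) := fun j =>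
    (((S16.magP_continuous a u ha hu j).norm).pow 2).integrable_of_hasCompactSupport
      ((S16.magP_compactSupport a u hcu j).comp_left (g := fun z => ‖z‖^2) (by simp) : HasCompactSupport (fun x => ‖magP a j u x‖^2))
  have hsumi : Integrable (fun x => ∑ j, ‖magP a j u x‖^2) := by
    have := (hmagi 0).add (hmagi 1)
    apply this.congr
    filter_upwards with x
    simp [Fin.sum_univ_two]
  -- the key magnetic inequality
  have hkey := S16.key_ineq a u ha hu hcu
  set J := ∫ x, Bfield a 0 1 x * ‖u x‖^2 with hJdef
  set S := ∫ x, ∑ j, ‖magP a j u x‖^2 with hSdef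
  set T := ∫ x, V x * ‖u x‖^2 with hTdef
  have hδJ : δ * J ≤ S := by
    calc δ * J ≤ |δ * J| := le_abs_self _
      _ = |δ| * |J| := abs_mul δ J
      _ ≤ 1 * |J| := mul_le_mul_of_nonneg_right (abs_le.mpr ⟨hδ.1, hδ.2⟩) (abs_nonneg J)
      _ = |J| := one_mul _
      _ ≤ S := hkey
  have hVδi : Integrable (fun x => (V x + δ * Bfield a 0 1 x) * ‖u x‖^2) := by
    apply (hVui.add (hBui.const_mul δ)).congr
    filter_upwards with x
    simp only [Pi.add_apply]
    ring
  have hmono : M * (∫ x, ‖u x‖^2) ≤ ∫ x, (V x + δ * Bfield a 0 1 x) * ‖u x‖^2 := by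
    rw [← integral_const_mul]
    exact integral_mono (hu2i.const_mul M) hVδi hpt
  have hsplit : (∫ x, (V x + δ * Bfield a 0 1 x) * ‖u x‖^2) = T + δ * J := by
    have h1 : (∫ x, (V x + δ * Bfield a 0 1 x) * ‖u x‖^2)
        = ∫ x, (V x * ‖u x‖^2 + δ * (Bfield a 0 1 x * ‖u x‖^2)) := by
      apply integral_congr_ae
      filter_upwards with x
      ring
    rw [h1, integral_add hVui (hBui.const_mul δ), integral_const_mul]
  have hgoal : (∫ x, ((∑ j, ‖magP a j u x‖^2) + V x * ‖u x‖^2)) = S + T :=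
    integral_add hsumi hVui
  rw [hgoal]
  rw [hsplit] at hmono
  linarith
end
end
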